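/- arXiv:2412.12455 — 12 statements merged into one kernel-verified Lean document; each statement's English description precedes it below -/
import Mathlib

section
/- Let p be a prime, q = p^e a power of p, ℓ an odd prime different from p, and m a positive integer coprime to q. Let γ be an integer and let τ be the least positive integer with γ·q^τ ≡ γ (mod m). If ℓ does not divide q^τ − 1, then v_ℓ(γ) ≥ v_ℓ(m), and there exists an integer γ₀ with γ₀ ≡ γ (mod m) and v_ℓ(γ₀) ≥ v_ℓ(m) + 1. -/
/-!
Since `m ∣ γ (q^τ - 1)` and `ℓ` does not divide `q^τ - 1`, the full `ℓ`-part `ℓ^k` of `m`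
divides `γ`. As `gcd(m, ℓ^(k+1)) = ℓ^k`, Bézout writes `γ = m x + ℓ^(k+1) y`, and
`γ₀ := ℓ^(k+1) y` is the required representative.
-/

theorem Int.exists_modEq_and_dvd_of_gcd_dvd {a b c : ℤ} (h : (a.gcd b : ℤ) ∣ c) :
    ∃ c₀, c₀ ≡ c [ZMOD a] ∧ b ∣ c₀ := by
  obtain ⟨d, rfl⟩ := h
  exact ⟨b * (a.gcdB b * d), Int.modEq_iff_dvd.2 ⟨a.gcdA b * d, by rw [Int.gcd_eq_gcd_ab]; ring⟩,
    dvd_mul_right _ _⟩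

theorem Nat.gcd_pow_padicValNat_succ {ℓ m : ℕ} (hℓ : ℓ.Prime) (hm : m ≠ 0) :
    m.gcd (ℓ ^ (padicValNat ℓ m + 1)) = ℓ ^ padicValNat ℓ m := by
  have hcop : (ordCompl[ℓ] m).Coprime ℓ :=
    Nat.coprime_comm.mp ((Nat.Prime.coprime_iff_not_dvd hℓ).2 (Nat.not_dvd_ordCompl hℓ hm))
  have hsplit := Nat.ordProj_mul_ordCompl_eq_self m ℓ
  rw [Nat.factorization_def m hℓ] at hcop hsplit
  calc m.gcd (ℓ ^ (padicValNat ℓ m + 1))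
      = (ℓ ^ padicValNat ℓ m * (m / ℓ ^ padicValNat ℓ m)).gcd (ℓ ^ padicValNat ℓ m * ℓ) := by
        rw [hsplit, pow_succ]
    _ = ℓ ^ padicValNat ℓ m := by rw [Nat.gcd_mul_left, hcop.gcd_eq_one, mul_one]

theorem Int.pow_padicValNat_dvd_of_dvd_mul {ℓ m : ℕ} {a b : ℤ} (hℓ : ℓ.Prime)
    (hab : (m : ℤ) ∣ a * b) (hb : ¬ (ℓ : ℤ) ∣ b) : (ℓ : ℤ) ^ padicValNat ℓ m ∣ a := by
  have hcop : IsCoprime ((ℓ : ℤ) ^ padicValNat ℓ m) b :=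
    ((Nat.prime_iff_prime_int.mp hℓ).coprime_iff_not_dvd.mpr hb).pow_left
  exact hcop.dvd_of_dvd_mul_right ((Int.natCast_dvd_natCast.mpr pow_padicValNat_dvd).trans hab)

theorem stmt_0_general (q ℓ m : ℕ)
    (hℓ : ℓ.Prime)
    (hm : 0 < m)
    (γ : ℤ) (τ : ℕ)
    (hτ : IsLeast {t : ℕ | 0 < t ∧ γ * (q : ℤ) ^ t ≡ γ [ZMOD (m : ℤ)]} τ)
    (hnd : ¬ (ℓ : ℤ) ∣ (q : ℤ) ^ τ - 1) :
    (ℓ : ℤ) ^ padicValNat ℓ m ∣ γ ∧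
      ∃ γ₀ : ℤ, γ₀ ≡ γ [ZMOD (m : ℤ)] ∧ (ℓ : ℤ) ^ (padicValNat ℓ m + 1) ∣ γ₀ := by
  have hm_dvd : (m : ℤ) ∣ γ * ((q : ℤ) ^ τ - 1) := by
    simpa only [mul_sub_one] using hτ.1.2.symm.dvd
  have hγ := Int.pow_padicValNat_dvd_of_dvd_mul hℓ hm_dvd hnd
  refine ⟨hγ, Int.exists_modEq_and_dvd_of_gcd_dvd ?_⟩
  rwa [← Nat.cast_pow, Int.gcd_natCast_natCast, Nat.gcd_pow_padicValNat_succ hℓ hm.ne', Nat.cast_pow]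

theorem stmt_0 (p e q ℓ m : ℕ) (hp : p.Prime) (he : 0 < e) (hq : q = p ^ e)
    (hℓ : ℓ.Prime) (hℓ2 : ℓ ≠ 2) (hℓp : ℓ ≠ p)
    (hm : 0 < m) (hmq : Nat.Coprime m q)
    (γ : ℤ) (τ : ℕ)
    (hτ : IsLeast {t : ℕ | 0 < t ∧ γ * (q : ℤ) ^ t ≡ γ [ZMOD (m : ℤ)]} τ)
    (hnd : ¬ (ℓ : ℤ) ∣ (q : ℤ) ^ τ - 1) :
    (ℓ : ℤ) ^ padicValNat ℓ m ∣ γ ∧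
      ∃ γ₀ : ℤ, γ₀ ≡ γ [ZMOD (m : ℤ)] ∧ (ℓ : ℤ) ^ (padicValNat ℓ m + 1) ∣ γ₀ :=
  stmt_0_general q ℓ m hℓ hm γ τ hτ hnd
end

section
/- Let p be a prime, q = p^e a power of p, ℓ an odd prime different from p, and m a positive integer coprime to q. Let γ be an integer and let τ be the least positive integer with γ·q^τ ≡ γ (mod m). Assume ℓ does not divide q^τ − 1, and let γ₀ be an integer with γ₀ ≡ γ (mod m) and ℓ^{v_ℓ(m)+1} ∣ γ₀. Then τ is also the least positive integer j such that γ₀·q^j ≡ γ₀ (mod ℓm); in other words, the q-cyclotomic coset modulo ℓm containing γ₀ has size τ. -/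
theorem stmt_1 (p e q ℓ m : ℕ) (hp : p.Prime) (he : 0 < e) (hq : q = p ^ e)
    (hℓ : ℓ.Prime) (hℓ2 : ℓ ≠ 2) (hℓp : ℓ ≠ p)
    (hm : 0 < m) (hmq : Nat.Coprime m q)
    (γ : ℤ) (τ : ℕ)
    (hτ : IsLeast {t : ℕ | 0 < t ∧ γ * (q : ℤ) ^ t ≡ γ [ZMOD (m : ℤ)]} τ)
    (hnd : ¬ (ℓ : ℤ) ∣ (q : ℤ) ^ τ - 1)
    (γ₀ : ℤ) (hγ₀γ : γ₀ ≡ γ [ZMOD (m : ℤ)])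
    (hγ₀ : (ℓ : ℤ) ^ (padicValNat ℓ m + 1) ∣ γ₀) :
    IsLeast {j : ℕ | 0 < j ∧ γ₀ * (q : ℤ) ^ j ≡ γ₀ [ZMOD ((ℓ * m : ℕ) : ℤ)]} τ := by
  obtain ⟨⟨hτpos, hτmod⟩, hτlb⟩ := hτ
  haveI := Fact.mk hℓ
  set v := padicValNat ℓ m with hv
  have hfact : (1 : ℕ) < ℓ := hℓ.one_lt
  have hdvdpow : ℓ ^ v ∣ m := pow_padicValNat_dvd
  set m' := m / ℓ ^ v with hm'def
  have hsplit : ℓ ^ v * m' = m := Nat.mul_div_cancel' hdvdpow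
  have hnotdvd : ¬ ℓ ∣ m' := by
    intro hdvd
    have h1 : ¬ ℓ ^ (v + 1) ∣ m := pow_succ_padicValNat_not_dvd hm.ne'
    apply h1
    rw [← hsplit, pow_succ]
    exact mul_dvd_mul_left _ hdvd
  have hco : Nat.Coprime (ℓ ^ (v + 1)) m' :=
    Nat.Coprime.pow_left _ ((Nat.Prime.coprime_iff_not_dvd hℓ).mpr hnotdvd)
  have hlm : ℓ * m = ℓ ^ (v + 1) * m' := by rw [← hsplit]; ring
  have key : ∀ j : ℕ, (γ₀ * (q : ℤ) ^ j ≡ γ₀ [ZMOD ((ℓ * m : ℕ) : ℤ)]) ↔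
      (γ * (q : ℤ) ^ j ≡ γ [ZMOD (m : ℤ)]) := by
    intro j
    have hmul : γ₀ * (q : ℤ) ^ j ≡ γ * (q : ℤ) ^ j [ZMOD (m : ℤ)] := hγ₀γ.mul_right _
    constructor
    · intro h
      have hm_dvd : ((m : ℤ)) ∣ ((ℓ * m : ℕ) : ℤ) := by
        push_cast
        exact dvd_mul_left _ _
      exact (hmul.symm.trans (h.of_dvd hm_dvd)).trans hγ₀γ
    · intro h
      have h1 : γ₀ * (q : ℤ) ^ j ≡ γ₀ [ZMOD (m : ℤ)] := hmul.trans (h.trans hγ₀γ.symm)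
      have h2 : (m : ℤ) ∣ γ₀ * (q : ℤ) ^ j - γ₀ := h1.symm.dvd
      have h3 : ((ℓ ^ (v + 1) : ℕ) : ℤ) ∣ γ₀ * (q : ℤ) ^ j - γ₀ := by
        push_cast
        exact dvd_sub (hγ₀.mul_right _) hγ₀
      have h4 : ((m' : ℕ) : ℤ) ∣ γ₀ * (q : ℤ) ^ j - γ₀ := by
        refine dvd_trans ?_ h2
        exact_mod_cast Nat.div_dvd_of_dvd hdvdpow
      have hcoZ : IsCoprime ((ℓ ^ (v + 1) : ℕ) : ℤ) ((m' : ℕ) : ℤ) :=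
        Nat.isCoprime_iff_coprime.mpr hco
      have h5 : ((ℓ * m : ℕ) : ℤ) ∣ γ₀ * (q : ℤ) ^ j - γ₀ := by
        rw [hlm]
        push_cast at hcoZ h3 h4 ⊢
        exact hcoZ.mul_dvd h3 h4
      exact (Int.modEq_iff_dvd.mpr h5).symm
  constructor
  · exact ⟨hτpos, (key τ).mpr hτmod⟩
  · intro j hj
    exact hτlb ⟨hj.1, (key j).mp hj.2⟩
end

section
/- Let p be a prime, q = p^e a power of p, ℓ an odd prime different from p, and m a positive integer coprime to q. Let γ be an integer, τ the least positive integer with γ·q^τ ≡ γ (mod m), and assume ℓ does not divide q^τ − 1. Let γ₀ be an integer with γ₀ ≡ γ (mod m) and ℓ^{v_ℓ(m)+1} ∣ γ₀, and let d be an integer not divisible by ℓ. Then the least positive integer j with (γ₀ + d·m)·q^j ≡ γ₀ + d·m (mod ℓm) equals ord_ℓ(q^τ)·τ; in other words, the q-cyclotomic coset modulo ℓm containing γ₀ + d·m has size ord_ℓ(q^τ)·τ. -/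
theorem stmt_2 (p e q ℓ m : ℕ) (hp : p.Prime) (he : 0 < e) (hq : q = p ^ e)
    (hℓ : ℓ.Prime) (hℓ2 : ℓ ≠ 2) (hℓp : ℓ ≠ p)
    (hm : 0 < m) (hmq : Nat.Coprime m q)
    (γ : ℤ) (τ : ℕ)
    (hτ : IsLeast {t : ℕ | 0 < t ∧ γ * (q : ℤ) ^ t ≡ γ [ZMOD (m : ℤ)]} τ)
    (hnd : ¬ (ℓ : ℤ) ∣ (q : ℤ) ^ τ - 1)
    (γ₀ : ℤ) (hγ₀γ : γ₀ ≡ γ [ZMOD (m : ℤ)])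
    (hγ₀ : (ℓ : ℤ) ^ (padicValNat ℓ m + 1) ∣ γ₀)
    (d : ℤ) (hd : ¬ (ℓ : ℤ) ∣ d) :
    IsLeast {j : ℕ | 0 < j ∧ (γ₀ + d * m) * (q : ℤ) ^ j ≡ γ₀ + d * m [ZMOD ((ℓ * m : ℕ) : ℤ)]}
      (orderOf ((q : ZMod ℓ) ^ τ) * τ) := by
  haveI : Fact ℓ.Prime := ⟨hℓ⟩
  obtain ⟨⟨hτpos, hτmem⟩, hτlb⟩ := hτ
  set a := padicValNat ℓ m with ha
  -- basics
  have hℓq : ¬ ℓ ∣ q := by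
    intro h
    exact hℓp (Nat.prime_dvd_prime_iff_eq hℓ hp |>.mp (hℓ.dvd_of_dvd_pow (hq ▸ h)))
  have hq0 : (q : ZMod ℓ) ≠ 0 := by
    rw [Ne, ZMod.natCast_eq_zero_iff]
    exact hℓq
  set r := orderOf ((q : ZMod ℓ)) with hr
  have hrpos : 0 < r := by
    have h1 : (q : ZMod ℓ) ^ (ℓ - 1) = 1 := ZMod.pow_card_sub_one_eq_one hq0
    have : IsOfFinOrder ((q : ZMod ℓ)) :=
      isOfFinOrder_iff_pow_eq_one.mpr ⟨ℓ - 1, Nat.sub_pos_of_lt hℓ.one_lt, h1⟩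
    exact orderOf_pos_iff.mpr this
  -- ℓ-part criterion
  have hℓdvd : ∀ j : ℕ, ((ℓ:ℤ) ∣ (q:ℤ)^j - 1) ↔ r ∣ j := by
    intro j
    constructor
    · intro h
      have h0 : (((q:ℤ)^j - 1 : ℤ) : ZMod ℓ) = 0 := (ZMod.intCast_zmod_eq_zero_iff_dvd _ ℓ).mpr h
      have h1 : (q : ZMod ℓ) ^ j = 1 := by
        push_cast at h0
        linear_combination h0
      exact orderOf_dvd_iff_pow_eq_one.mpr h1
    · intro h
      have h1 : (q : ZMod ℓ) ^ j = 1 := orderOf_dvd_iff_pow_eq_one.mp h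
      rw [← ZMod.intCast_zmod_eq_zero_iff_dvd]
      push_cast
      linear_combination h1
  -- τ-part criterion
  have hmul : ∀ k : ℕ, γ * (q:ℤ)^(τ * k) ≡ γ [ZMOD (m:ℤ)] := by
    intro k
    induction k with
    | zero => simp
    | succ k ih =>
      have heq : γ * (q:ℤ)^(τ * (k+1)) = (γ * (q:ℤ)^(τ * k)) * (q:ℤ)^τ := by
        rw [Nat.mul_succ, pow_add]
        ring
      rw [heq]
      calc (γ * (q:ℤ)^(τ * k)) * (q:ℤ)^τ ≡ γ * (q:ℤ)^τ [ZMOD (m:ℤ)] :=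
            Int.ModEq.mul_right _ ih
        _ ≡ γ [ZMOD (m:ℤ)] := hτmem
  have hτiff : ∀ j : ℕ, (γ * (q:ℤ)^j ≡ γ [ZMOD (m:ℤ)]) ↔ τ ∣ j := by
    intro j
    constructor
    · intro hj
      have hdm : j = τ * (j / τ) + j % τ := (Nat.div_add_mod j τ).symm
      have h2 : γ * (q:ℤ)^j ≡ γ * (q:ℤ)^(j % τ) [ZMOD (m:ℤ)] := by
        conv_lhs => rw [hdm]
        rw [pow_add, ← mul_assoc]
        exact Int.ModEq.mul_right _ (hmul (j / τ))
      have h3 : γ * (q:ℤ)^(j % τ) ≡ γ [ZMOD (m:ℤ)] := h2.symm.trans hj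
      by_contra hcon
      have hs : 0 < j % τ := by
        rcases Nat.eq_zero_or_pos (j % τ) with h | h
        · exact absurd (Nat.dvd_of_mod_eq_zero h) hcon
        · exact h
      have := hτlb ⟨hs, h3⟩
      have := Nat.mod_lt j hτpos
      omega
    · rintro ⟨k, rfl⟩
      exact hmul k
  -- factor m = ℓ^a * b with ℓ ∤ b
  have hpa : ℓ ^ a ∣ m := pow_padicValNat_dvd
  set b := m / ℓ ^ a with hb
  have hmb : m = ℓ ^ a * b := (Nat.mul_div_cancel' hpa).symm
  have hmZ : (m:ℤ) = (ℓ:ℤ)^a * (b:ℤ) := by exact_mod_cast congrArg (Nat.cast : ℕ → ℤ) hmb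
  have hbpos : 0 < b := by
    rcases Nat.eq_zero_or_pos b with h | h
    · rw [h, mul_zero] at hmb; omega
    · exact h
  have hℓb : ¬ ℓ ∣ b := by
    intro h
    obtain ⟨c, hcc⟩ := h
    have : ℓ ^ (a + 1) ∣ m := ⟨c, by rw [hmb, hcc]; ring⟩
    exact pow_succ_padicValNat_not_dvd hm.ne' this
  have hcopZ : IsCoprime ((ℓ:ℤ) ^ (a+1)) ((b:ℤ)) := by
    rw [← Nat.cast_pow]
    exact Nat.isCoprime_iff_coprime.mpr ((hℓ.coprime_iff_not_dvd.mpr hℓb).pow_left _)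
  have hcopZ' : IsCoprime ((ℓ:ℤ) ^ a) ((b:ℤ)) := by
    rw [← Nat.cast_pow]
    exact Nat.isCoprime_iff_coprime.mpr ((hℓ.coprime_iff_not_dvd.mpr hℓb).pow_left _)
  -- δ structure
  set δ : ℤ := γ₀ + d * m with hδ
  obtain ⟨c, hc⟩ := hγ₀
  set w : ℤ := ℓ * c + d * b with hw
  have hδw : δ = (ℓ:ℤ)^a * w := by
    rw [hδ, hc, hw, hmZ, pow_succ]
    ring
  have hℓw : ¬ (ℓ:ℤ) ∣ w := by
    intro h
    have h1 : (ℓ:ℤ) ∣ d * b := by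
      have heq : d * (b:ℤ) = w - ℓ * c := by rw [hw]; ring
      rw [heq]
      exact dvd_sub h (Dvd.intro c rfl)
    rcases (Nat.prime_iff_prime_int.mp hℓ).dvd_mul.mp h1 with h2 | h2
    · exact hd h2
    · exact hℓb (by exact_mod_cast h2)
  -- split divisibility by ℓ*m
  have hNsplit : ∀ X : ℤ, ((↑(ℓ * m) : ℤ) ∣ X) ↔ ((ℓ:ℤ)^(a+1) ∣ X ∧ (b:ℤ) ∣ X) := by
    intro X
    have hN : ((ℓ * m : ℕ) : ℤ) = (ℓ:ℤ)^(a+1) * (b:ℤ) := by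
      push_cast [hmb]
      ring
    rw [hN]
    constructor
    · intro h
      exact ⟨(dvd_mul_right _ _).trans h, (dvd_mul_left _ _).trans h⟩
    · rintro ⟨h1, h2⟩
      exact hcopZ.mul_dvd h1 h2
  -- modeq to dvd form
  have hmodiff : ∀ (x y N : ℤ), (x * y ≡ x [ZMOD N]) ↔ N ∣ x * (y - 1) := by
    intro x y N
    rw [Int.modEq_iff_dvd]
    constructor
    · intro h
      have heq : x * (y - 1) = -(x - x * y) := by ring
      rw [heq]
      exact dvd_neg.mpr h
    · intro h
      have heq : x - x * y = -(x * (y - 1)) := by ring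
      rw [heq]
      exact dvd_neg.mpr h
  -- m-part: m ∣ δ*(q^j-1) ↔ τ ∣ j
  have hmpart : ∀ j : ℕ, ((m:ℤ) ∣ δ * ((q:ℤ)^j - 1)) ↔ τ ∣ j := by
    intro j
    have hδγ : (m:ℤ) ∣ δ - γ := by
      have h1 : (m:ℤ) ∣ γ₀ - γ := Int.modEq_iff_dvd.mp hγ₀γ.symm
      have heq : δ - γ = (γ₀ - γ) + d * m := by rw [hδ]; ring
      rw [heq]
      exact dvd_add h1 ⟨d, by ring⟩
    have key : (m:ℤ) ∣ δ * ((q:ℤ)^j - 1) ↔ (m:ℤ) ∣ γ * ((q:ℤ)^j - 1) := by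
      constructor <;> intro h
      · have heq : γ * ((q:ℤ)^j - 1) = δ * ((q:ℤ)^j - 1) - (δ - γ) * ((q:ℤ)^j - 1) := by ring
        rw [heq]; exact dvd_sub h (hδγ.mul_right _)
      · have heq : δ * ((q:ℤ)^j - 1) = γ * ((q:ℤ)^j - 1) + (δ - γ) * ((q:ℤ)^j - 1) := by ring
        rw [heq]; exact dvd_add h (hδγ.mul_right _)
    rw [key, ← hmodiff, hτiff]
  -- ℓ-part: ℓ^(a+1) ∣ δ*(q^j-1) ↔ r ∣ j
  have hℓa0 : ((ℓ:ℤ)^a) ≠ 0 := pow_ne_zero _ (by exact_mod_cast hℓ.pos.ne')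
  have hℓpart : ∀ j : ℕ, ((ℓ:ℤ)^(a+1) ∣ δ * ((q:ℤ)^j - 1)) ↔ r ∣ j := by
    intro j
    rw [hδw, mul_assoc, pow_succ, mul_dvd_mul_iff_left hℓa0]
    constructor
    · intro h2
      rcases (Nat.prime_iff_prime_int.mp hℓ).dvd_mul.mp h2 with h3 | h3
      · exact absurd h3 hℓw
      · exact (hℓdvd j).mp h3
    · intro h
      exact ((hℓdvd j).mpr h).mul_left w
  -- main characterization
  have hchar : ∀ j : ℕ, (δ * (q:ℤ)^j ≡ δ [ZMOD ((ℓ*m:ℕ):ℤ)]) ↔ (τ ∣ j ∧ r ∣ j) := by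
    intro j
    rw [hmodiff, hNsplit]
    constructor
    · rintro ⟨h1, h2⟩
      refine ⟨?_, (hℓpart j).mp h1⟩
      have hma : (ℓ:ℤ)^a ∣ δ * ((q:ℤ)^j - 1) :=
        (pow_dvd_pow (ℓ:ℤ) (Nat.le_succ a)).trans h1
      have hmX : (m:ℤ) ∣ δ * ((q:ℤ)^j - 1) := by
        rw [hmZ]
        exact hcopZ'.mul_dvd hma h2
      exact (hmpart j).mp hmX
    · rintro ⟨h1, h2⟩
      have hmX : (m:ℤ) ∣ δ * ((q:ℤ)^j - 1) := (hmpart j).mpr h1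
      refine ⟨(hℓpart j).mpr h2, ?_⟩
      have hbm : (b:ℤ) ∣ (m:ℤ) := ⟨(ℓ:ℤ)^a, by rw [hmZ]; ring⟩
      exact hbm.trans hmX
  -- L = lcm r τ
  have hL : orderOf ((q : ZMod ℓ) ^ τ) * τ = Nat.lcm r τ := by
    rw [orderOf_pow' _ hτpos.ne', ← hr]
    have hg : 0 < Nat.gcd r τ := Nat.gcd_pos_of_pos_left _ hrpos
    apply Nat.eq_of_mul_eq_mul_left hg
    rw [← mul_assoc, Nat.mul_div_cancel' (Nat.gcd_dvd_left r τ), Nat.gcd_mul_lcm]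
  rw [hL]
  constructor
  · refine ⟨Nat.pos_of_ne_zero (Nat.lcm_ne_zero hrpos.ne' hτpos.ne'), ?_⟩
    exact (hchar _).mpr ⟨Nat.dvd_lcm_right r τ, Nat.dvd_lcm_left r τ⟩
  · rintro j ⟨hj, hjmem⟩
    obtain ⟨h1, h2⟩ := (hchar j).mp hjmem
    exact Nat.le_of_dvd hj (Nat.lcm_dvd h2 h1)
end

section
/- Let p be a prime, q = p^e a power of p, ℓ an odd prime different from p, and m a positive integer coprime to q. Let γ₀ be an integer and τ the least positive integer with γ₀·q^τ ≡ γ₀ (mod m), and assume ℓ^{v_ℓ(m)+1} ∣ γ₀. If d₁, d₂ are integers and j is a positive integer such that (γ₀ + d₁·m)·q^j ≡ γ₀ + d₂·m (mod ℓm), then τ divides j and d₂ ≡ d₁·q^j (mod ℓ). In particular, if d₁ and d₂ represent distinct classes of (ℤ/ℓℤ)*/⟨q^τ⟩, then the q-cyclotomic cosets modulo ℓm containing γ₀ + d₁·m and γ₀ + d₂·m are disjoint. -/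
/-!
Reducing the hypothesis modulo `m` shows that `q ^ j` fixes `γ₀` modulo `m`, so the minimal period
`τ` divides `j`. Modulo `ℓ ^ (v_ℓ(m) + 1)` the terms in `γ₀` vanish, and what is left is
`m (d₁ q ^ j - d₂)`; as `m` carries only `v_ℓ(m)` factors of `ℓ`, this forces `d₂ ≡ d₁ q ^ j`
modulo `ℓ`, with `q ^ j` a power of `q ^ τ`. Two cosets that meet would give such a `j`, because
`q` has finite order modulo `ℓ m`.
-/

/-- The `q`-cyclotomic coset modulo `m` containing (the class of) the integer `γ`,
as a subset of `ZMod m`. -/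
def cycCoset (q m : ℕ) (γ : ℤ) : Set (ZMod m) :=
  {x | ∃ j : ℕ, x = (γ : ZMod m) * (q : ZMod m) ^ j}

open Function

theorem Function.minimalPeriod_eq_of_isLeast {α : Type*} {f : α → α} {x : α} {τ : ℕ}
    (h : IsLeast {t | 0 < t ∧ IsPeriodicPt f t x} τ) : minimalPeriod f x = τ :=
  le_antisymm (h.1.2.minimalPeriod_le h.1.1)
    (h.2 ⟨h.1.2.minimalPeriod_pos h.1.1, isPeriodicPt_minimalPeriod f x⟩)

theorem ZMod.isPeriodicPt_mul_right_iff_modEq {n : ℕ} {a b : ℤ} {t : ℕ} :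
    IsPeriodicPt (· * (b : ZMod n)) t (a : ZMod n) ↔ a * b ^ t ≡ a [ZMOD n] := by
  rw [← ZMod.intCast_eq_intCast_iff, IsPeriodicPt, IsFixedPt, mul_right_iterate_apply]
  push_cast
  rfl

theorem Int.dvd_of_isLeast_mul_pow_modEq {n τ j : ℕ} {a b : ℤ}
    (hτ : IsLeast {t | 0 < t ∧ a * b ^ t ≡ a [ZMOD n]} τ) (hj : a * b ^ j ≡ a [ZMOD n]) :
    τ ∣ j := by
  simp_rw [← ZMod.isPeriodicPt_mul_right_iff_modEq] at hτ hj
  rw [← minimalPeriod_eq_of_isLeast hτ]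
  exact hj.minimalPeriod_dvd

theorem Int.dvd_of_pow_padicValNat_succ_dvd_mul {ℓ m : ℕ} [Fact ℓ.Prime] (hm : m ≠ 0) {a : ℤ}
    (h : (ℓ : ℤ) ^ (padicValNat ℓ m + 1) ∣ m * a) : (ℓ : ℤ) ∣ a := by
  rcases eq_or_ne a 0 with rfl | ha
  · exact dvd_zero _
  have hm' : (m : ℤ) ≠ 0 := Int.natCast_ne_zero.mpr hm
  rw [padicValInt_dvd_iff, or_iff_right (mul_ne_zero hm' ha), padicValInt.mul hm' ha,
    padicValInt.of_nat] at h
  simpa using (padicValInt_dvd_iff 1 a).mpr (Or.inr (by omega))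

theorem Int.modEq_mul_of_add_mul_modEq {ℓ m : ℕ} [Fact ℓ.Prime] (hm : m ≠ 0) {γ d₁ d₂ u : ℤ}
    (hγ : (ℓ : ℤ) ^ (padicValNat ℓ m + 1) ∣ γ)
    (h : (γ + d₁ * m) * u ≡ γ + d₂ * m [ZMOD ((ℓ * m : ℕ) : ℤ)]) :
    d₂ ≡ d₁ * u [ZMOD ℓ] := by
  have hℓm : (ℓ : ℤ) ^ (padicValNat ℓ m + 1) ∣ ((ℓ * m : ℕ) : ℤ) := by
    rw [pow_succ', Nat.cast_mul]
    exact mul_dvd_mul_left _ (Int.natCast_dvd_natCast.mpr pow_padicValNat_dvd)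
  have hdiff := hℓm.trans (Int.modEq_iff_dvd.mp h)
  have key : (ℓ : ℤ) ^ (padicValNat ℓ m + 1) ∣ m * (d₂ - d₁ * u) := by
    have := dvd_add hdiff (hγ.mul_right (u - 1))
    rwa [show γ + d₂ * m - (γ + d₁ * m) * u + γ * (u - 1) = m * (d₂ - d₁ * u) by ring] at this
  exact (Int.modEq_iff_dvd.mpr (Int.dvd_of_pow_padicValNat_succ_dvd_mul hm key)).symm

theorem Int.mul_modEq_of_add_mul_modEq {ℓ m : ℕ} {γ d₁ d₂ u : ℤ}
    (h : (γ + d₁ * m) * u ≡ γ + d₂ * m [ZMOD ((ℓ * m : ℕ) : ℤ)]) : γ * u ≡ γ [ZMOD m] := by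
  have hd : ∀ d : ℤ, γ + d * m ≡ γ [ZMOD m] := fun d => Int.add_mul_emod_self_right γ d m
  rw [Nat.cast_mul] at h
  exact ((hd d₁).symm.mul_right u).trans ((h.of_mul_left ℓ).trans (hd d₂))

theorem exists_pos_mul_pow_eq_of_mul_pow_eq {M : Type*} [CommMonoid M] {a b g : M} {r i k : ℕ}
    (hr : 0 < r) (hg : g ^ r = 1) (h : a * g ^ i = b * g ^ k) : ∃ j, 0 < j ∧ a * g ^ j = b := by
  obtain ⟨s, rfl⟩ : ∃ s, r = s + 1 := ⟨r - 1, by omega⟩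
  refine ⟨i + s * k + (s + 1), by omega, ?_⟩
  calc a * g ^ (i + s * k + (s + 1)) = a * g ^ i * g ^ (s * k) * g ^ (s + 1) := by
        simp only [pow_add, mul_assoc]
    _ = b * (g ^ (s + 1)) ^ k * g ^ (s + 1) := by
        rw [h, mul_assoc b, ← pow_add, ← pow_mul, show k + s * k = (s + 1) * k by ring]
    _ = b := by rw [hg, one_pow, mul_one, mul_one]

theorem exists_pos_modEq_of_not_disjoint_cycCoset {q n : ℕ} (hn : 0 < n) (hq : q.Coprime n)
    {a b : ℤ} (h : ¬Disjoint (cycCoset q n a) (cycCoset q n b)) :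
    ∃ j, 0 < j ∧ a * (q : ℤ) ^ j ≡ b [ZMOD n] := by
  obtain ⟨x, ⟨i, rfl⟩, ⟨k, hk⟩⟩ := Set.not_disjoint_iff.mp h
  have hqφ : (q : ZMod n) ^ n.totient = 1 := by
    exact_mod_cast (ZMod.natCast_eq_natCast_iff _ _ _).mpr (Nat.ModEq.pow_totient hq)
  obtain ⟨j, hj, hab⟩ := exists_pos_mul_pow_eq_of_mul_pow_eq (Nat.totient_pos.mpr hn) hqφ hk
  exact ⟨j, hj, (ZMod.intCast_eq_intCast_iff _ _ _).mp (by push_cast; exact hab)⟩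

theorem stmt_3_general (p e q ℓ m : ℕ) (hp : p.Prime) (hq : q = p ^ e)
    (hℓ : ℓ.Prime) (hℓp : ℓ ≠ p)
    (hm : 0 < m) (hmq : Nat.Coprime m q)
    (γ₀ : ℤ) (τ : ℕ)
    (hτ : IsLeast {t : ℕ | 0 < t ∧ γ₀ * (q : ℤ) ^ t ≡ γ₀ [ZMOD (m : ℤ)]} τ)
    (hγ₀ : (ℓ : ℤ) ^ (padicValNat ℓ m + 1) ∣ γ₀) :
    (∀ d₁ d₂ : ℤ, ∀ j : ℕ, 0 < j →
        (γ₀ + d₁ * m) * (q : ℤ) ^ j ≡ γ₀ + d₂ * m [ZMOD ((ℓ * m : ℕ) : ℤ)] →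
        τ ∣ j ∧ d₂ ≡ d₁ * (q : ℤ) ^ j [ZMOD (ℓ : ℤ)]) ∧
      (∀ d₁ d₂ : ℤ, ¬ (ℓ : ℤ) ∣ d₁ → ¬ (ℓ : ℤ) ∣ d₂ →
        (¬ ∃ k : ℕ, d₂ ≡ d₁ * ((q : ℤ) ^ τ) ^ k [ZMOD (ℓ : ℤ)]) →
        Disjoint (cycCoset q (ℓ * m) (γ₀ + d₁ * m)) (cycCoset q (ℓ * m) (γ₀ + d₂ * m))) := by
  have := Fact.mk hℓ
  have part1 : ∀ d₁ d₂ : ℤ, ∀ j : ℕ, 0 < j →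
      (γ₀ + d₁ * m) * (q : ℤ) ^ j ≡ γ₀ + d₂ * m [ZMOD ((ℓ * m : ℕ) : ℤ)] →
      τ ∣ j ∧ d₂ ≡ d₁ * (q : ℤ) ^ j [ZMOD (ℓ : ℤ)] := fun d₁ d₂ j _ h =>
    ⟨Int.dvd_of_isLeast_mul_pow_modEq hτ (Int.mul_modEq_of_add_mul_modEq h),
      Int.modEq_mul_of_add_mul_modEq hm.ne' hγ₀ h⟩
  refine ⟨part1, fun d₁ d₂ _ _ hne => ?_⟩
  by_contra hmeet
  have hqℓ : q.Coprime ℓ := hq ▸ ((Nat.coprime_primes hp hℓ).mpr hℓp.symm).pow_left e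
  obtain ⟨j, hj, hmod⟩ :=
    exists_pos_modEq_of_not_disjoint_cycCoset (Nat.mul_pos hℓ.pos hm) (hqℓ.mul_right hmq.symm)
      hmeet
  obtain ⟨hτj, hd⟩ := part1 d₁ d₂ j hj hmod
  exact hne ⟨j / τ, by rwa [← pow_mul, Nat.mul_div_cancel' hτj]⟩

theorem stmt_3 (p e q ℓ m : ℕ) (hp : p.Prime) (he : 0 < e) (hq : q = p ^ e)
    (hℓ : ℓ.Prime) (hℓ2 : ℓ ≠ 2) (hℓp : ℓ ≠ p)
    (hm : 0 < m) (hmq : Nat.Coprime m q)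
    (γ₀ : ℤ) (τ : ℕ)
    (hτ : IsLeast {t : ℕ | 0 < t ∧ γ₀ * (q : ℤ) ^ t ≡ γ₀ [ZMOD (m : ℤ)]} τ)
    (hγ₀ : (ℓ : ℤ) ^ (padicValNat ℓ m + 1) ∣ γ₀) :
    (∀ d₁ d₂ : ℤ, ∀ j : ℕ, 0 < j →
        (γ₀ + d₁ * m) * (q : ℤ) ^ j ≡ γ₀ + d₂ * m [ZMOD ((ℓ * m : ℕ) : ℤ)] →
        τ ∣ j ∧ d₂ ≡ d₁ * (q : ℤ) ^ j [ZMOD (ℓ : ℤ)]) ∧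
      (∀ d₁ d₂ : ℤ, ¬ (ℓ : ℤ) ∣ d₁ → ¬ (ℓ : ℤ) ∣ d₂ →
        (¬ ∃ k : ℕ, d₂ ≡ d₁ * ((q : ℤ) ^ τ) ^ k [ZMOD (ℓ : ℤ)]) →
        Disjoint (cycCoset q (ℓ * m) (γ₀ + d₁ * m)) (cycCoset q (ℓ * m) (γ₀ + d₂ * m))) :=
  stmt_3_general p e q ℓ m hp hq hℓ hℓp hm hmq γ₀ τ hτ hγ₀
end

section
/- Let p be a prime, q = p^e a power of p, ℓ a prime different from p, and m a positive integer coprime to q. Let γ be an integer and c_{m/q}(γ) its q-cyclotomic coset modulo m. Then the preimage of c_{m/q}(γ) under the canonical projection π_{ℓm/m} : ℤ/ℓmℤ → ℤ/mℤ equals the union over d = 0, 1, …, ℓ−1 of the q-cyclotomic cosets modulo ℓm containing γ + d·m. -/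
theorem stmt_4 (p e q ℓ m : ℕ) (hp : p.Prime) (he : 0 < e) (hq : q = p ^ e)
    (hℓ : ℓ.Prime) (hℓp : ℓ ≠ p)
    (hm : 0 < m) (hmq : Nat.Coprime m q) (γ : ℤ) :
    (ZMod.castHom (dvd_mul_left m ℓ) (ZMod m)) ⁻¹' (cycCoset q m γ) =
      ⋃ d ∈ Finset.range ℓ, cycCoset q (ℓ * m) (γ + (d : ℤ) * m) := by

  haveI : Fact ℓ.Prime := ⟨hℓ⟩
  haveI : NeZero (ℓ * m) := ⟨Nat.mul_ne_zero hℓ.pos.ne' hm.ne'⟩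
  have hqℓ : (q : ZMod ℓ) ≠ 0 := by
    rw [Ne, ZMod.natCast_eq_zero_iff]
    intro h
    exact hℓp ((Nat.prime_dvd_prime_iff_eq hℓ hp).mp (hℓ.dvd_of_dvd_pow (hq ▸ h)))
  ext x
  obtain ⟨a, rfl⟩ : ∃ a : ℤ, (a : ZMod (ℓ * m)) = x := ZMod.intCast_surjective x
  simp only [Set.mem_preimage, cycCoset, Set.mem_setOf_eq, Set.mem_iUnion, Finset.mem_range,
    map_intCast]
  constructor
  · rintro ⟨j, hj⟩
    have hmod : a ≡ γ * (q : ℤ) ^ j [ZMOD (m : ℤ)] := by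
      rw [Int.ModEq] at *
      have := ZMod.intCast_eq_intCast_iff (a) (γ * (q:ℤ)^j) m
      apply (ZMod.intCast_eq_intCast_iff _ _ _).mp
      push_cast
      exact hj
    obtain ⟨t, ht⟩ : (m : ℤ) ∣ a - γ * (q : ℤ) ^ j := (Int.ModEq.dvd hmod.symm)
    set d : ℕ := ((t : ZMod ℓ) * ((q : ZMod ℓ) ^ j)⁻¹).val with hd
    have hdlt : d < ℓ := ZMod.val_lt _
    have hdq : ((d : ℤ) : ZMod ℓ) * (q : ZMod ℓ) ^ j = (t : ZMod ℓ) := by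
      push_cast
      rw [hd, ZMod.natCast_val, ZMod.cast_id, mul_assoc, inv_mul_cancel₀ (pow_ne_zero _ hqℓ), mul_one]
    have hℓdvd : (ℓ : ℤ) ∣ (d : ℤ) * (q : ℤ) ^ j - t := by
      have : (((d : ℤ) * (q:ℤ)^j : ℤ) : ZMod ℓ) = ((t : ℤ) : ZMod ℓ) := by
        push_cast
        push_cast at hdq
        exact hdq
      exact Int.ModEq.dvd ((ZMod.intCast_eq_intCast_iff _ _ _).mp this).symm
    refine ⟨d, hdlt, j, ?_⟩
    have key : (ℓ * m : ℤ) ∣ (γ + (d : ℤ) * m) * (q : ℤ) ^ j - a := by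
      have : (γ + (d : ℤ) * m) * (q : ℤ) ^ j - a
          = m * ((d:ℤ) * (q:ℤ)^j - t) := by rw [sub_eq_iff_eq_add'] at ht; rw [ht]; ring
      rw [this, mul_comm (ℓ:ℤ) (m:ℤ)]
      exact mul_dvd_mul_left _ hℓdvd
    have : ((a : ℤ) : ZMod (ℓ * m)) = (((γ + (d : ℤ) * m) * (q : ℤ) ^ j : ℤ) : ZMod (ℓ*m)) := by
      rw [ZMod.intCast_eq_intCast_iff]
      exact Int.modEq_iff_dvd.mpr (by push_cast; exact key)
    rw [this]; push_cast [Nat.cast_mul]; ring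
  · rintro ⟨d, hdlt, j, hj⟩
    refine ⟨j, ?_⟩
    have : ((a : ℤ) : ZMod m) = (ZMod.castHom (dvd_mul_left m ℓ) (ZMod m)) ((a : ℤ) : ZMod (ℓ*m)) := by
      simp
    rw [this, hj, map_mul, map_pow, map_intCast, map_natCast]
    push_cast
    rw [ZMod.natCast_self]
    ring
end

section
/- Let p be a prime, q = p^e a power of p, ℓ an odd prime different from p, and m a positive integer coprime to q. Let γ be an integer and τ the least positive integer with γ·q^τ ≡ γ (mod m). Assume ℓ divides q^τ − 1 and v_ℓ(γ) + v_ℓ(q^τ − 1) ≥ v_ℓ(m) + 1. Then for every integer d, the least positive integer j with (γ + d·m)·q^j ≡ γ + d·m (mod ℓm) equals τ; in other words, each q-cyclotomic coset modulo ℓm containing γ + d·m has size τ. -/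
theorem stmt_5 (p e q ℓ m : ℕ) (hp : p.Prime) (he : 0 < e) (hq : q = p ^ e)
    (hℓ : ℓ.Prime) (hℓ2 : ℓ ≠ 2) (hℓp : ℓ ≠ p)
    (hm : 0 < m) (hmq : Nat.Coprime m q)
    (γ : ℤ) (τ : ℕ)
    (hτ : IsLeast {t : ℕ | 0 < t ∧ γ * (q : ℤ) ^ t ≡ γ [ZMOD (m : ℤ)]} τ)
    (hdvd : (ℓ : ℤ) ∣ (q : ℤ) ^ τ - 1)
    (hval : (ℓ : ℤ) ^ (padicValNat ℓ m + 1) ∣ γ * ((q : ℤ) ^ τ - 1)) :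
    ∀ d : ℤ,
      IsLeast {j : ℕ | 0 < j ∧ (γ + d * m) * (q : ℤ) ^ j ≡ γ + d * m [ZMOD ((ℓ * m : ℕ) : ℤ)]}
        τ := by
  intro d
  set a := padicValNat ℓ m with ha
  set m' := m / ℓ ^ a with hm'
  have hfact : m.factorization ℓ = a := by
    rw [Nat.factorization_def _ hℓ]
  have hpa : ℓ ^ a ∣ m := by
    rw [ha]; exact pow_padicValNat_dvd
  have hmeq : ℓ ^ a * m' = m := Nat.mul_div_cancel' hpa
  have hcop : Nat.Coprime (ℓ ^ (a + 1)) m' := by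
    have := Nat.coprime_ordCompl hℓ hm.ne'
    rw [hfact] at this
    exact Nat.Coprime.pow_left _ this
  have hm1 : (m : ℤ) ∣ γ * ((q : ℤ) ^ τ - 1) := by
    have := (hτ.1.2).dvd
    have h : γ - γ * (q:ℤ) ^ τ = -(γ * ((q:ℤ)^τ - 1)) := by ring
    rw [h] at this
    exact (dvd_neg).mp this
  have hx : ((ℓ * m : ℕ) : ℤ) ∣ (γ + d * m) * ((q : ℤ) ^ τ - 1) := by
    have hsplit : (γ + d * m) * ((q : ℤ) ^ τ - 1)
        = γ * ((q:ℤ)^τ - 1) + d * (m * ((q:ℤ)^τ - 1)) := by ring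
    have hla : ((ℓ ^ (a+1) : ℕ) : ℤ) ∣ (γ + d * m) * ((q : ℤ) ^ τ - 1) := by
      rw [hsplit]
      refine dvd_add ?_ ?_
      · push_cast; exact hval
      · refine Dvd.dvd.mul_left ?_ d
        have : ((ℓ^a : ℕ) : ℤ) * (ℓ : ℤ) ∣ (m : ℤ) * ((q:ℤ)^τ - 1) :=
          mul_dvd_mul (by exact_mod_cast hpa) hdvd
        calc ((ℓ ^ (a+1) : ℕ) : ℤ) = ((ℓ^a : ℕ) : ℤ) * (ℓ : ℤ) := by push_cast; ring
          _ ∣ _ := this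
    have hm'dvd : ((m' : ℕ) : ℤ) ∣ (γ + d * m) * ((q : ℤ) ^ τ - 1) := by
      have h1 : (m : ℤ) ∣ (γ + d * m) * ((q : ℤ) ^ τ - 1) := by
        rw [hsplit]
        exact dvd_add hm1 (Dvd.dvd.mul_left (Dvd.dvd.mul_right dvd_rfl _) d)
      exact dvd_trans (by exact_mod_cast Nat.div_dvd_of_dvd hpa) h1
    have hcopZ : IsCoprime ((ℓ ^ (a+1) : ℕ) : ℤ) ((m' : ℕ) : ℤ) :=
      Nat.isCoprime_iff_coprime.mpr hcop
    have := hcopZ.mul_dvd hla hm'dvd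
    have heq : ((ℓ ^ (a+1) : ℕ) : ℤ) * ((m' : ℕ) : ℤ) = ((ℓ * m : ℕ) : ℤ) := by
      have hn : ℓ ^ (a+1) * m' = ℓ * m := by
        rw [pow_succ, mul_comm (ℓ^a) ℓ, mul_assoc, hmeq]
      exact_mod_cast congrArg (Nat.cast (R := ℤ)) hn
    rwa [heq] at this
  constructor
  · refine ⟨hτ.1.1, ?_⟩
    have : ((ℓ * m : ℕ) : ℤ) ∣ (γ + d * m) - (γ + d * m) * (q : ℤ) ^ τ := by
      have h : (γ + d * m) - (γ + d * m) * (q : ℤ) ^ τ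
          = -((γ + d * m) * ((q : ℤ) ^ τ - 1)) := by ring
      rw [h]; exact dvd_neg.mpr hx
    exact (Int.modEq_iff_dvd.mpr this)
  · rintro j ⟨hj0, hj⟩
    refine hτ.2 ⟨hj0, ?_⟩
    have hmdvd : (m : ℤ) ∣ ((ℓ * m : ℕ) : ℤ) := by
      push_cast; exact Dvd.intro_left _ rfl
    have hmod : (γ + d * m) * (q : ℤ) ^ j ≡ γ + d * m [ZMOD (m : ℤ)] :=
      hj.of_dvd hmdvd
    have hdm : (d * m) * (q : ℤ) ^ j ≡ d * m [ZMOD (m : ℤ)] := by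
      have : (m : ℤ) ∣ d * m - (d * m) * (q : ℤ) ^ j := by
        have h : d * m - (d * m) * (q : ℤ) ^ j = m * (d * (1 - (q:ℤ)^j)) := by ring
        rw [h]; exact Dvd.intro _ rfl
      exact Int.modEq_iff_dvd.mpr this
    have := hmod.sub hdm
    have heq1 : (γ + d * m) * (q : ℤ) ^ j - (d * m) * (q : ℤ) ^ j = γ * (q:ℤ)^j := by ring
    have heq2 : (γ + d * m) - d * m = γ := by ring
    rwa [heq1, heq2] at this
end

section
/- Let p be a prime, q = p^e a power of p, ℓ an odd prime different from p, and m a positive integer coprime to q. Let γ be an integer and τ the least positive integer with γ·q^τ ≡ γ (mod m). Assume ℓ divides q^τ − 1 and ℓ^{v_ℓ(m)+1} divides γ·(q^τ − 1). Then the q-cyclotomic cosets modulo ℓm containing γ + d·m for d = 0, 1, …, ℓ−1 are pairwise disjoint, and their union equals the preimage of c_{m/q}(γ) under the canonical projection ℤ/ℓmℤ → ℤ/mℤ. -/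
/-- Key divisibility: from `m ∣ A` and `ℓ^(v_ℓ(m)+1) ∣ A` deduce `ℓ*m ∣ A`. -/
private lemma aux_dvd (ℓ m : ℕ) (hℓ : ℓ.Prime) (hm : 0 < m) (A : ℤ)
    (hA1 : (m : ℤ) ∣ A) (hA2 : (ℓ : ℤ) ^ (padicValNat ℓ m + 1) ∣ A) :
    ((ℓ * m : ℕ) : ℤ) ∣ A := by
  set v := padicValNat ℓ m with hv
  have hfac : m.factorization ℓ = v := Nat.factorization_def m hℓ
  set m' := m / ℓ ^ v with hm'
  have hsplit : ℓ * m = ℓ ^ (v + 1) * m' := by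
    have h0 := Nat.ordProj_mul_ordCompl_eq_self m ℓ
    rw [hfac] at h0
    rw [← hm'] at h0
    calc ℓ * m = ℓ * (ℓ ^ v * m') := by rw [h0]
      _ = ℓ ^ (v + 1) * m' := by ring
  have hndvd : ¬ ℓ ∣ m' := by
    have := Nat.not_dvd_ordCompl hℓ hm.ne'
    rwa [hfac] at this
  have hcop : Nat.Coprime (ℓ ^ (v + 1)) m' :=
    Nat.Coprime.pow_left _ (hℓ.coprime_iff_not_dvd.mpr hndvd)
  have hcopZ : IsCoprime ((ℓ ^ (v + 1) : ℕ) : ℤ) ((m' : ℕ) : ℤ) :=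
    Nat.isCoprime_iff_coprime.mpr hcop
  have hm'm : m' ∣ m := Nat.div_dvd_of_dvd (by
    have := Nat.ordProj_dvd m ℓ
    rwa [hfac] at this)
  have hm'dvd : ((m' : ℕ) : ℤ) ∣ A :=
    dvd_trans (Int.natCast_dvd_natCast.mpr hm'm) hA1
  have hℓdvd : ((ℓ ^ (v + 1) : ℕ) : ℤ) ∣ A := by push_cast; exact_mod_cast hA2
  have := hcopZ.mul_dvd hℓdvd hm'dvd
  rwa [show ((ℓ * m : ℕ) : ℤ) = ((ℓ ^ (v + 1) : ℕ) : ℤ) * ((m' : ℕ) : ℤ) by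
    rw [← Nat.cast_mul, hsplit]]

/-- `q^τ` fixes `γ + d*m` modulo `ℓ*m`, and so do all its powers. -/
private lemma coset_step (ℓ m q τ : ℕ) (γ : ℤ)
    (hkey : ((ℓ * m : ℕ) : ℤ) ∣ γ * ((q : ℤ) ^ τ - 1))
    (hℓdvd : (ℓ : ℤ) ∣ (q : ℤ) ^ τ - 1) (d : ℤ) (k : ℕ) :
    (γ + d * m) * (q : ℤ) ^ (τ * k) ≡ (γ + d * m) [ZMOD ((ℓ * m : ℕ) : ℤ)] := by
  have base : (γ + d * m) * (q : ℤ) ^ τ ≡ (γ + d * m) [ZMOD ((ℓ * m : ℕ) : ℤ)] := by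
    rw [Int.modEq_iff_dvd]
    have h2 : ((ℓ * m : ℕ) : ℤ) ∣ (d * m) * ((q : ℤ) ^ τ - 1) := by
      obtain ⟨c, hc⟩ := hℓdvd
      exact ⟨d * c, by push_cast; rw [hc]; ring⟩
    have h3 := dvd_add hkey h2
    have h4 : γ * ((q : ℤ) ^ τ - 1) + (d * m) * ((q : ℤ) ^ τ - 1)
        = -((γ + d * ↑m) - (γ + d * ↑m) * (q : ℤ) ^ τ) := by ring
    rw [h4] at h3
    exact (Int.dvd_neg).mp h3
  induction k with
  | zero => simp
  | succ k ih =>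
    calc (γ + d * m) * (q : ℤ) ^ (τ * (k + 1))
        = ((γ + d * m) * (q : ℤ) ^ (τ * k)) * (q : ℤ) ^ τ := by
          rw [Nat.mul_succ, pow_add]; ring
      _ ≡ (γ + d * m) * (q : ℤ) ^ τ [ZMOD ((ℓ * m : ℕ) : ℤ)] := ih.mul_right _
      _ ≡ (γ + d * m) [ZMOD ((ℓ * m : ℕ) : ℤ)] := base

/-- Minimality: `τ` divides any `t` with `γ q^t ≡ γ (mod m)`. -/
private lemma tau_dvd (m q τ : ℕ) (γ : ℤ)
    (hτ : IsLeast {t : ℕ | 0 < t ∧ γ * (q : ℤ) ^ t ≡ γ [ZMOD (m : ℤ)]} τ)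
    (t : ℕ) (ht : γ * (q : ℤ) ^ t ≡ γ [ZMOD (m : ℤ)]) : τ ∣ t := by
  obtain ⟨⟨hτpos, hτmem⟩, hlb⟩ := hτ
  have hmul : ∀ k, γ * (q : ℤ) ^ (τ * k) ≡ γ [ZMOD (m : ℤ)] := by
    intro k; induction k with
    | zero => simp
    | succ k ih =>
      calc γ * (q : ℤ) ^ (τ * (k + 1)) = (γ * (q : ℤ) ^ τ) * (q : ℤ) ^ (τ * k) := by
            rw [Nat.mul_succ, pow_add]; ring
        _ ≡ γ * (q : ℤ) ^ (τ * k) [ZMOD (m : ℤ)] := hτmem.mul_right _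
        _ ≡ γ [ZMOD (m : ℤ)] := ih
  have h1 : γ * (q : ℤ) ^ (t % τ) ≡ γ [ZMOD (m : ℤ)] := by
    calc γ * (q : ℤ) ^ (t % τ)
        ≡ (γ * (q : ℤ) ^ (τ * (t / τ))) * (q : ℤ) ^ (t % τ) [ZMOD (m : ℤ)] :=
          ((hmul _).symm.mul_right _)
      _ = γ * (q : ℤ) ^ t := by rw [mul_assoc, ← pow_add, Nat.div_add_mod]
      _ ≡ γ [ZMOD (m : ℤ)] := ht
  by_contra hndvd
  have hr : t % τ ≠ 0 := fun h => hndvd (Nat.dvd_of_mod_eq_zero h)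
  have hle := hlb ⟨Nat.pos_of_ne_zero hr, h1⟩
  have hlt := Nat.mod_lt t hτpos
  omega

/-- If two of the shifted cosets mod `ℓ*m` intersect, the shifts agree. -/
private lemma eq_of_inter (ℓ m q τ : ℕ) (γ : ℤ) (hm : 0 < m) (hℓ1 : 0 < ℓ)
    (hqn : Nat.Coprime q (ℓ * m))
    (hτ : IsLeast {t : ℕ | 0 < t ∧ γ * (q : ℤ) ^ t ≡ γ [ZMOD (m : ℤ)]} τ)
    (hkey : ((ℓ * m : ℕ) : ℤ) ∣ γ * ((q : ℤ) ^ τ - 1))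
    (hℓdvd : (ℓ : ℤ) ∣ (q : ℤ) ^ τ - 1)
    (d₁ d₂ : ℕ) (h1 : d₁ < ℓ) (h2 : d₂ < ℓ) (i j : ℕ) (hij : j ≤ i)
    (heq : (γ + d₁ * m) * (q : ℤ) ^ i ≡ (γ + d₂ * m) * (q : ℤ) ^ j
      [ZMOD ((ℓ * m : ℕ) : ℤ)]) : d₁ = d₂ := by
  have hnpos : (0 : ℤ) < ((ℓ * m : ℕ) : ℤ) := by positivity
  have heq' : ((γ + d₁ * m) * (q : ℤ) ^ (i - j)) * (q : ℤ) ^ j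
      ≡ (γ + d₂ * m) * (q : ℤ) ^ j [ZMOD ((ℓ * m : ℕ) : ℤ)] := by
    rwa [mul_assoc, ← pow_add, Nat.sub_add_cancel hij]
  have hg : Int.gcd ((ℓ * m : ℕ) : ℤ) ((q : ℤ) ^ j) = 1 := by
    rw [show ((q : ℤ) ^ j) = ((q ^ j : ℕ) : ℤ) by push_cast; ring, Int.gcd_natCast_natCast]
    exact (hqn.symm.pow_right j)
  have hA := heq'.cancel_right_div_gcd hnpos
  rw [hg] at hA
  norm_num at hA
  -- hA : (γ + d₁ * m) * q ^ (i - j) ≡ γ + d₂ * m [ZMOD (ℓ*m)]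
  have hmdvd : (m : ℤ) ∣ ((ℓ * m : ℕ) : ℤ) := ⟨ℓ, by push_cast; ring⟩
  have hAm := hA.of_dvd hmdvd
  have e1 : γ * (q : ℤ) ^ (i - j) ≡ (γ + d₁ * m) * (q : ℤ) ^ (i - j) [ZMOD (m : ℤ)] :=
    Int.modEq_iff_dvd.mpr ⟨d₁ * (q : ℤ) ^ (i - j), by ring⟩
  have e2 : (γ + (d₂ : ℤ) * m) ≡ γ [ZMOD (m : ℤ)] :=
    Int.modEq_iff_dvd.mpr ⟨-d₂, by ring⟩
  have hq : γ * (q : ℤ) ^ (i - j) ≡ γ [ZMOD (m : ℤ)] := e1.trans (hAm.trans e2)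
  obtain ⟨k, hk⟩ := tau_dvd m q τ γ hτ (i - j) hq
  have hstep := coset_step ℓ m q τ γ hkey hℓdvd (d₁ : ℤ) k
  rw [← hk] at hstep
  have hfin : (γ + (d₁ : ℤ) * m) ≡ (γ + (d₂ : ℤ) * m) [ZMOD ((ℓ * m : ℕ) : ℤ)] :=
    hstep.symm.trans hA
  have hdvd2 : ((ℓ : ℤ) * m) ∣ ((d₂ : ℤ) - d₁) * m := by
    have := hfin.dvd
    rw [show (γ + (d₂ : ℤ) * m) - (γ + (d₁ : ℤ) * m) = ((d₂ : ℤ) - d₁) * m by ring] at this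
    rwa [show ((ℓ * m : ℕ) : ℤ) = (ℓ : ℤ) * m by push_cast; ring] at this
  have hℓd : (ℓ : ℤ) ∣ ((d₂ : ℤ) - d₁) :=
    (mul_dvd_mul_iff_right (show (m : ℤ) ≠ 0 by exact_mod_cast hm.ne')).mp hdvd2
  have habs : |(d₂ : ℤ) - d₁| < (ℓ : ℤ) := by
    rw [abs_lt]; constructor <;> omega
  have := Int.eq_zero_of_abs_lt_dvd hℓd habs
  omega

theorem stmt_6 (p e q ℓ m : ℕ) (hp : p.Prime) (he : 0 < e) (hq : q = p ^ e)
    (hℓ : ℓ.Prime) (hℓ2 : ℓ ≠ 2) (hℓp : ℓ ≠ p)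
    (hm : 0 < m) (hmq : Nat.Coprime m q)
    (γ : ℤ) (τ : ℕ)
    (hτ : IsLeast {t : ℕ | 0 < t ∧ γ * (q : ℤ) ^ t ≡ γ [ZMOD (m : ℤ)]} τ)
    (hdvd : (ℓ : ℤ) ∣ (q : ℤ) ^ τ - 1)
    (hval : (ℓ : ℤ) ^ (padicValNat ℓ m + 1) ∣ γ * ((q : ℤ) ^ τ - 1)) :
    (∀ d₁ d₂ : ℕ, d₁ < ℓ → d₂ < ℓ → d₁ ≠ d₂ →
        Disjoint (cycCoset q (ℓ * m) (γ + (d₁ : ℤ) * m)) (cycCoset q (ℓ * m) (γ + (d₂ : ℤ) * m))) ∧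
      (⋃ d ∈ Finset.range ℓ, cycCoset q (ℓ * m) (γ + (d : ℤ) * m)) =
        (ZMod.castHom (dvd_mul_left m ℓ) (ZMod m)) ⁻¹' (cycCoset q m γ) := by
  have hτpos := hτ.1.1
  have hℓpos := hℓ.pos
  haveI : NeZero (ℓ * m) := ⟨by positivity⟩
  -- ℓ does not divide q
  have hℓq : ¬ ℓ ∣ q := by
    intro h
    have h1 : (ℓ : ℤ) ∣ (q : ℤ) ^ τ := dvd_pow (Int.natCast_dvd_natCast.2 h) hτpos.ne'
    have h2 : (ℓ : ℤ) ∣ 1 := by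
      have := dvd_sub h1 hdvd
      simpa using this
    have h3 : (ℓ : ℤ) ≤ 1 := Int.le_of_dvd one_pos h2
    have := hℓ.one_lt
    omega
  have hqℓ : Nat.Coprime q ℓ := (hℓ.coprime_iff_not_dvd.mpr hℓq).symm
  have hqn : Nat.Coprime q (ℓ * m) := Nat.Coprime.mul_right hqℓ hmq.symm
  -- key divisibility
  have hA1 : (m : ℤ) ∣ γ * ((q : ℤ) ^ τ - 1) := by
    obtain ⟨c, hc⟩ := hτ.1.2.dvd
    exact ⟨-c, by linear_combination -hc⟩
  have hkey : ((ℓ * m : ℕ) : ℤ) ∣ γ * ((q : ℤ) ^ τ - 1) :=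
    aux_dvd ℓ m hℓ hm _ hA1 hval
  constructor
  · -- disjointness
    intro d₁ d₂ hd1 hd2 hne
    rw [Set.disjoint_left]
    intro x hx1 hx2
    obtain ⟨i, hi⟩ := hx1
    obtain ⟨j, hj⟩ := hx2
    have hcast : (((γ + d₁ * m) * (q : ℤ) ^ i : ℤ) : ZMod (ℓ * m))
        = (((γ + d₂ * m) * (q : ℤ) ^ j : ℤ) : ZMod (ℓ * m)) := by
      push_cast at hi hj ⊢
      rw [← hi, ← hj]
    rw [ZMod.intCast_eq_intCast_iff] at hcast
    rcases le_total j i with hij | hij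
    · exact hne (eq_of_inter ℓ m q τ γ hm hℓpos hqn hτ hkey hdvd d₁ d₂ hd1 hd2 i j hij hcast)
    · exact hne ((eq_of_inter ℓ m q τ γ hm hℓpos hqn hτ hkey hdvd d₂ d₁ hd2 hd1 j i hij
        hcast.symm).symm)
  · -- union equals preimage
    ext x
    simp only [Set.mem_iUnion, Set.mem_preimage, cycCoset, Set.mem_setOf_eq, Finset.mem_range,
      exists_prop]
    constructor
    · rintro ⟨d, hd, j, rfl⟩
      refine ⟨j, ?_⟩
      rw [map_mul, map_pow, map_intCast, map_natCast]
      push_cast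
      simp [ZMod.natCast_self]
    · rintro ⟨j, hj⟩
      have hx : x = (((x.val : ℤ)) : ZMod (ℓ * m)) := by
        rw [Int.cast_natCast, ZMod.natCast_zmod_val]
      set ξ : ℤ := (x.val : ℤ) with hξ
      have hj' : ((ξ : ℤ) : ZMod m) = ((γ * (q : ℤ) ^ j : ℤ) : ZMod m) := by
        rw [hx] at hj
        rw [map_intCast] at hj
        rw [hj]; push_cast; ring
      rw [ZMod.intCast_eq_intCast_iff] at hj'
      obtain ⟨c, hc⟩ := hj'.symm.dvd
      -- Bezout for q, ℓ
      obtain ⟨u, v, huv⟩ := Nat.isCoprime_iff_coprime.mpr hqℓ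
      have hu : u * q ≡ 1 [ZMOD (ℓ : ℤ)] :=
        Int.modEq_iff_dvd.mpr ⟨v, by linear_combination -huv⟩
      set D : ℤ := (c * u ^ j) % (ℓ : ℤ) with hD
      have hDnn : 0 ≤ D := Int.emod_nonneg _ (by exact_mod_cast hℓpos.ne')
      have hDlt : D < (ℓ : ℤ) := Int.emod_lt_of_pos _ (by exact_mod_cast hℓpos)
      set d : ℕ := D.toNat with hd
      have hdD : (d : ℤ) = D := Int.toNat_of_nonneg hDnn
      have hdℓ : d < ℓ := by omega
      have hDmod : D ≡ c * u ^ j [ZMOD (ℓ : ℤ)] := Int.emod_emod_of_dvd _ dvd_rfl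
      have hpow : (u * q : ℤ) ^ j ≡ 1 [ZMOD (ℓ : ℤ)] := by
        have := hu.pow (m := j)
        simpa using this
      have hdc : (d : ℤ) * (q : ℤ) ^ j ≡ c [ZMOD (ℓ : ℤ)] := by
        calc (d : ℤ) * (q : ℤ) ^ j = D * (q : ℤ) ^ j := by rw [hdD]
          _ ≡ (c * u ^ j) * (q : ℤ) ^ j [ZMOD (ℓ : ℤ)] := hDmod.mul_right _
          _ = c * (u * q) ^ j := by ring
          _ ≡ c * 1 [ZMOD (ℓ : ℤ)] := hpow.mul_left _
          _ = c := by ring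
      obtain ⟨w, hw⟩ := hdc.dvd
      refine ⟨d, hdℓ, j, ?_⟩
      rw [hx]
      rw [show ((γ + (d : ℤ) * m : ℤ) : ZMod (ℓ * m)) * ((q : ℕ) : ZMod (ℓ * m)) ^ j
          = (((γ + (d : ℤ) * m) * (q : ℤ) ^ j : ℤ) : ZMod (ℓ * m)) by push_cast; ring]
      rw [ZMod.intCast_eq_intCast_iff]
      rw [Int.modEq_iff_dvd]
      refine ⟨-w, ?_⟩
      push_cast
      first
        | linear_combination hc - (m : ℤ) * hw
        | linear_combination -hc - (m : ℤ) * hw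
        | linear_combination hc + (m : ℤ) * hw
        | linear_combination -hc + (m : ℤ) * hw
end

section
/- Let p be a prime, q = p^e a power of p, ℓ an odd prime different from p, and n a positive integer divisible by neither p nor ℓ. Let v be a nonnegative integer and γ an integer with ℓ^v ∣ γ. Then there is exactly one q-cyclotomic coset modulo ℓ^{v+1}n contained in the preimage of the coset c_{ℓ^v n/q}(γ) under the canonical projection ℤ/ℓ^{v+1}nℤ → ℤ/ℓ^v nℤ all of whose elements are divisible by ℓ^{v+1}. -/
theorem natCast_pow_totient {q m : ℕ} (h : q.Coprime m) : (q : ZMod m) ^ Nat.totient m = 1 := by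
  have := congrArg Units.val (ZMod.pow_totient (ZMod.unitOfCoprime q h))
  rwa [Units.val_pow_eq_pow_val, ZMod.coe_unitOfCoprime, Units.val_one] at this

theorem Int.exists_dvd_and_modEq {a n : ℤ} (h : IsCoprime a n) (γ : ℤ) :
    ∃ δ, a ∣ δ ∧ δ ≡ γ [ZMOD n] := by
  obtain ⟨u, w, huw⟩ := h
  exact ⟨γ * u * a, dvd_mul_left _ _, Int.modEq_iff_dvd.2 ⟨γ * w, by linear_combination -γ * huw⟩⟩

theorem intCast_eq_of_dvd_of_modEq {b n : ℕ} (hbn : b.Coprime n) {x y : ℤ}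
    (hx : (b : ℤ) ∣ x) (hy : (b : ℤ) ∣ y) (hxy : x ≡ y [ZMOD n]) :
    (x : ZMod (b * n)) = y := by
  rw [ZMod.intCast_eq_intCast_iff, Nat.cast_mul,
    ← Int.modEq_and_modEq_iff_modEq_mul (by simpa using hbn)]
  exact ⟨(Int.modEq_zero_iff_dvd.2 hx).trans (Int.modEq_zero_iff_dvd.2 hy).symm, hxy⟩

section CycCoset

variable {q m : ℕ}

theorem mem_cycCoset_self (γ : ℤ) : (γ : ZMod m) ∈ cycCoset q m γ :=
  ⟨0, by simp⟩

theorem cycCoset_congr {a b : ℤ} (h : (a : ZMod m) = b) : cycCoset q m a = cycCoset q m b := by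
  simp only [cycCoset, h]

theorem mapsTo_castHom_cycCoset {d : ℕ} (hdm : d ∣ m) (δ : ℤ) :
    Set.MapsTo (ZMod.castHom hdm (ZMod d)) (cycCoset q m δ) (cycCoset q d δ) := by
  rintro x ⟨j, rfl⟩
  exact ⟨j, by rw [map_mul, map_pow, map_intCast, map_natCast]⟩

theorem cycCoset_eq_of_mem (hqm : q.Coprime m) (hm : m ≠ 0) {a b : ℤ}
    (h : (b : ZMod m) ∈ cycCoset q m a) : cycCoset q m b = cycCoset q m a := by
  obtain ⟨j, hj⟩ := h
  obtain ⟨t, ht⟩ := Nat.exists_eq_succ_of_ne_zero (Nat.totient_pos.2 (Nat.pos_of_ne_zero hm)).ne'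
  have hqt : (q : ZMod m) ^ (t + 1) = 1 := by
    rw [← Nat.succ_eq_add_one, ← ht]; exact natCast_pow_totient hqm
  ext x
  constructor
  · rintro ⟨i, rfl⟩
    exact ⟨j + i, by rw [hj, pow_add, mul_assoc]⟩
  · rintro ⟨i, rfl⟩
    refine ⟨i + t * j, ?_⟩
    calc (a : ZMod m) * q ^ i = a * q ^ i * (q ^ (t + 1)) ^ j := by rw [hqt, one_pow, mul_one]
      _ = a * q ^ j * q ^ (i + t * j) := by ring
      _ = b * q ^ (i + t * j) := by rw [hj]

theorem cycCoset_eq_of_dvd_of_mem {b n : ℕ} (hbn : b.Coprime n) (hq : q.Coprime (b * n))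
    (hm : b * n ≠ 0) {x y : ℤ} (hx : (b : ℤ) ∣ x) (hy : (b : ℤ) ∣ y)
    (h : (y : ZMod n) ∈ cycCoset q n x) : cycCoset q (b * n) y = cycCoset q (b * n) x := by
  obtain ⟨j, hj⟩ := h
  have hyx : y ≡ x * q ^ j [ZMOD n] :=
    (ZMod.intCast_eq_intCast_iff _ _ _).1 (by push_cast; exact hj)
  refine cycCoset_eq_of_mem hq hm ⟨j, ?_⟩
  rw [intCast_eq_of_dvd_of_modEq hbn hy (dvd_mul_of_dvd_left hx _) hyx]
  push_cast; rfl

end CycCoset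

theorem stmt_8_general (p e q ℓ n : ℕ) (hp : p.Prime) (hq : q = p ^ e)
    (hℓ : ℓ.Prime) (hℓp : ℓ ≠ p)
    (hnp : ¬ p ∣ n) (hnℓ : ¬ ℓ ∣ n)
    (v : ℕ) (γ : ℤ) (hγ : (ℓ : ℤ) ^ v ∣ γ) :
    ∃! C : Set (ZMod (ℓ ^ (v + 1) * n)),
      (∃ δ : ℤ, C = cycCoset q (ℓ ^ (v + 1) * n) δ) ∧
      C ⊆ (ZMod.castHom (mul_dvd_mul_right (pow_dvd_pow ℓ (v.le_succ)) n)
            (ZMod (ℓ ^ v * n))) ⁻¹' (cycCoset q (ℓ ^ v * n) γ) ∧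
      ∀ x ∈ C, ∃ y : ℤ, (y : ZMod (ℓ ^ (v + 1) * n)) = x ∧ (ℓ : ℤ) ^ (v + 1) ∣ y := by
  have hℓn : ℓ.Coprime n := (Nat.Prime.coprime_iff_not_dvd hℓ).2 hnℓ
  have hqm : q.Coprime (ℓ ^ (v + 1) * n) := hq ▸ Nat.Coprime.pow_left e
    ((((Nat.coprime_primes hp hℓ).2 hℓp.symm).pow_right _).mul_right
      ((Nat.Prime.coprime_iff_not_dvd hp).2 hnp))
  have hm : ℓ ^ (v + 1) * n ≠ 0 :=
    mul_ne_zero (pow_ne_zero _ hℓ.ne_zero) (by rintro rfl; exact hnp (dvd_zero p))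
  have hℓn' : IsCoprime ((ℓ : ℤ) ^ (v + 1)) n := by exact_mod_cast (hℓn.pow_left _).isCoprime
  obtain ⟨δ, hδℓ, hδγ⟩ := Int.exists_dvd_and_modEq hℓn' γ
  have hδ : (δ : ZMod (ℓ ^ v * n)) = γ := intCast_eq_of_dvd_of_modEq (hℓn.pow_left v)
    (by push_cast; exact (pow_dvd_pow _ v.le_succ).trans hδℓ) (by exact_mod_cast hγ) hδγ
  refine ⟨cycCoset q _ δ, ⟨⟨δ, rfl⟩, cycCoset_congr hδ ▸ mapsTo_castHom_cycCoset _ δ, ?_⟩, ?_⟩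
  · rintro x ⟨j, rfl⟩
    exact ⟨δ * q ^ j, by push_cast; rfl, dvd_mul_of_dvd_left hδℓ _⟩
  · rintro C ⟨⟨δ', rfl⟩, hsub, hdiv⟩
    obtain ⟨y, hy, hyℓ⟩ := hdiv _ (mem_cycCoset_self δ')
    have hyv : (y : ZMod (ℓ ^ v * n)) ∈ cycCoset q _ δ := by
      have := hsub (mem_cycCoset_self δ')
      rwa [← hy, Set.mem_preimage, map_intCast, ← cycCoset_congr hδ] at this
    have hyn := mapsTo_castHom_cycCoset (dvd_mul_left n (ℓ ^ v)) δ hyv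
    rw [map_intCast] at hyn
    rw [← cycCoset_congr hy, cycCoset_eq_of_dvd_of_mem (hℓn.pow_left _) hqm hm
      (by exact_mod_cast hδℓ) (by exact_mod_cast hyℓ) hyn]

theorem stmt_8 (p e q ℓ n : ℕ) (hp : p.Prime) (he : 0 < e) (hq : q = p ^ e)
    (hℓ : ℓ.Prime) (hℓ2 : ℓ ≠ 2) (hℓp : ℓ ≠ p)
    (hn : 0 < n) (hnp : ¬ p ∣ n) (hnℓ : ¬ ℓ ∣ n)
    (v : ℕ) (γ : ℤ) (hγ : (ℓ : ℤ) ^ v ∣ γ) :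
    ∃! C : Set (ZMod (ℓ ^ (v + 1) * n)),
      (∃ δ : ℤ, C = cycCoset q (ℓ ^ (v + 1) * n) δ) ∧
      C ⊆ (ZMod.castHom (mul_dvd_mul_right (pow_dvd_pow ℓ (v.le_succ)) n)
            (ZMod (ℓ ^ v * n))) ⁻¹' (cycCoset q (ℓ ^ v * n) γ) ∧
      ∀ x ∈ C, ∃ y : ℤ, (y : ZMod (ℓ ^ (v + 1) * n)) = x ∧ (ℓ : ℤ) ^ (v + 1) ∣ y :=
  stmt_8_general p e q ℓ n hp hq hℓ hℓp hnp hnℓ v γ hγ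
end

section
/- Let p be a prime, q = p^e a power of p, ℓ an odd prime different from p, and n a positive integer divisible by neither p nor ℓ. Let γ be an integer, τ the least positive integer with γ·q^τ ≡ γ (mod n), and assume ℓ divides q^τ − 1; set v = v_ℓ(q^τ − 1). Then for every nonzero integer δ with δ ≡ γ (mod n) and every N ≥ 0, the size of the q-cyclotomic coset modulo ℓ^N n containing δ equals τ·ℓ^{max(0, N − v_ℓ(δ) − v)}. -/
/-!
Split the modulus as `ℓ ^ N * n` with coprime factors. Modulo `n`, `δ * q ^ j ≡ δ` is the same
condition as `γ * q ^ j ≡ γ`, i.e. `τ ∣ j`, because `τ` is the minimal period of multiplication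
by `q` at `γ`. Writing `j = τ * m` and `Q = q ^ τ ≡ 1 [ZMOD ℓ]`, the condition modulo `ℓ ^ N` is
`ℓ ^ N ∣ δ * (Q ^ m - 1)`, and lifting the exponent (`ℓ` odd) gives
`v_ℓ (Q ^ m - 1) = v_ℓ (Q - 1) + v_ℓ m`, so it says `ℓ ^ (N - v_ℓ δ - v_ℓ (Q - 1)) ∣ m`.
-/

open Function

theorem isLeast_pos_of_forall_iff_dvd {P : ℕ → Prop} {d : ℕ} (hd : 0 < d)
    (h : ∀ j, P j ↔ d ∣ j) : IsLeast {j | 0 < j ∧ P j} d :=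
  ⟨⟨hd, (h d).2 dvd_rfl⟩, fun _ ⟨hj, hPj⟩ => Nat.le_of_dvd hj ((h _).1 hPj)⟩

theorem mul_pow_eq_self_iff_dvd {M : Type*} [Monoid M] {x a : M} {τ : ℕ}
    (hτ : IsLeast {t | 0 < t ∧ x * a ^ t = x} τ) (j : ℕ) : x * a ^ j = x ↔ τ ∣ j := by
  have hper : ∀ t, IsPeriodicPt (· * a) t x ↔ x * a ^ t = x := fun t => by
    rw [IsPeriodicPt, IsFixedPt, mul_right_iterate_apply]
  have hτper : IsPeriodicPt (· * a) τ x := (hper τ).2 hτ.1.2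
  have hmin : minimalPeriod (· * a) x = τ :=
    le_antisymm (hτper.minimalPeriod_le hτ.1.1)
      (hτ.2 ⟨hτper.minimalPeriod_pos hτ.1.1, (hper _).1 (isPeriodicPt_minimalPeriod _ x)⟩)
  rw [← hper, isPeriodicPt_iff_minimalPeriod_dvd, hmin]

theorem Int.mul_pow_modEq_self_iff_dvd {n : ℕ} {x a : ℤ} {τ : ℕ}
    (hτ : IsLeast {t | 0 < t ∧ x * a ^ t ≡ x [ZMOD n]} τ) (j : ℕ) :
    x * a ^ j ≡ x [ZMOD n] ↔ τ ∣ j := by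
  simp only [← ZMod.intCast_eq_intCast_iff, Int.cast_mul, Int.cast_pow] at hτ ⊢
  exact mul_pow_eq_self_iff_dvd hτ j

theorem padicValInt_pow_sub_one {ℓ : ℕ} [Fact ℓ.Prime] (hℓ : Odd ℓ) {Q : ℤ} (hQ : 1 < Q)
    (hℓQ : (ℓ : ℤ) ∣ Q - 1) {m : ℕ} (hm : m ≠ 0) :
    padicValInt ℓ (Q ^ m - 1) = padicValInt ℓ (Q - 1) + padicValNat ℓ m := by
  lift Q to ℕ using by omega
  rw [Nat.one_lt_cast] at hQ
  have hQ1 : (Q : ℤ) - 1 = ((Q - 1 : ℕ) : ℤ) := by rw [Nat.cast_sub hQ.le, Nat.cast_one]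
  have hQm : (Q : ℤ) ^ m - 1 = ((Q ^ m - 1 : ℕ) : ℤ) := by
    rw [Nat.cast_sub (Nat.one_le_pow _ _ (by omega)), Nat.cast_pow, Nat.cast_one]
  rw [hQ1, Int.natCast_dvd_natCast] at hℓQ
  have hℓQ' : ¬ ℓ ∣ Q := fun h => (Fact.out : ℓ.Prime).not_dvd_one <| by
    simpa [Nat.sub_sub_self hQ.le] using Nat.dvd_sub h hℓQ
  rw [hQ1, hQm, padicValInt.of_nat, padicValInt.of_nat]
  simpa using padicValNat.pow_sub_pow hℓ hQ hℓQ hℓQ' hm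

theorem pow_dvd_mul_pow_sub_one_iff {ℓ : ℕ} [Fact ℓ.Prime] (hℓ : Odd ℓ) {Q : ℤ} (hQ : 1 < Q)
    (hℓQ : (ℓ : ℤ) ∣ Q - 1) {δ : ℤ} (hδ : δ ≠ 0) (N m : ℕ) :
    (ℓ : ℤ) ^ N ∣ δ * (Q ^ m - 1) ↔
      ℓ ^ (N - (padicValInt ℓ δ + padicValInt ℓ (Q - 1))) ∣ m := by
  rcases eq_or_ne m 0 with rfl | hm
  · simp
  have hQm : Q ^ m - 1 ≠ 0 := sub_ne_zero.2 (one_lt_pow₀ hQ hm).ne'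
  rw [padicValInt_dvd_iff, padicValInt.mul hδ hQm, padicValInt_pow_sub_one hℓ hQ hℓQ hm,
    padicValNat_dvd_iff_le hm]
  simp only [mul_eq_zero, hδ, hQm, or_self, false_or]
  omega

theorem dvd_and_iff_mul_dvd {P : ℕ → Prop} {a b : ℕ} (h : ∀ m, P (a * m) ↔ b ∣ m) (j : ℕ) :
    a ∣ j ∧ P j ↔ a * b ∣ j := by
  constructor
  · rintro ⟨⟨m, rfl⟩, hP⟩
    exact mul_dvd_mul_left a ((h m).1 hP)
  · rintro ⟨c, rfl⟩
    rw [mul_assoc]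
    exact ⟨dvd_mul_right a _, (h _).2 (dvd_mul_right b c)⟩

theorem stmt_12_general (p e q ℓ n : ℕ) (hp : p.Prime) (he : 0 < e) (hq : q = p ^ e)
    (hℓ : ℓ.Prime) (hℓ2 : ℓ ≠ 2)
    (hnℓ : ¬ ℓ ∣ n)
    (γ : ℤ) (τ : ℕ)
    (hτ : IsLeast {t : ℕ | 0 < t ∧ γ * (q : ℤ) ^ t ≡ γ [ZMOD (n : ℤ)]} τ)
    (hdvd : (ℓ : ℤ) ∣ (q : ℤ) ^ τ - 1) :
    ∀ δ : ℤ, δ ≠ 0 → δ ≡ γ [ZMOD (n : ℤ)] → ∀ N : ℕ,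
      IsLeast {j : ℕ | 0 < j ∧ δ * (q : ℤ) ^ j ≡ δ [ZMOD ((ℓ ^ N * n : ℕ) : ℤ)]}
        (τ * ℓ ^ (N - (padicValInt ℓ δ + padicValInt ℓ ((q : ℤ) ^ τ - 1)))) := by
  have : Fact ℓ.Prime := ⟨hℓ⟩
  intro δ hδ hδγ N
  have hqτ : 1 < (q : ℤ) ^ τ := by
    have hq1 : 1 < q := hq ▸ Nat.one_lt_pow he.ne' hp.one_lt
    exact_mod_cast Nat.one_lt_pow hτ.1.1.ne' hq1
  have hcop : ((ℓ ^ N : ℕ) : ℤ).natAbs.Coprime (n : ℤ).natAbs := by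
    simpa using Nat.Coprime.pow_left N ((Nat.Prime.coprime_iff_not_dvd hℓ).2 hnℓ)
  have hn_part (j : ℕ) : δ * (q : ℤ) ^ j ≡ δ [ZMOD n] ↔ τ ∣ j := by
    rw [← Int.mul_pow_modEq_self_iff_dvd hτ j]
    exact ⟨fun h => ((hδγ.mul_right _).symm.trans h).trans hδγ,
      fun h => ((hδγ.mul_right _).trans h).trans hδγ.symm⟩
  have hℓ_part (m : ℕ) : δ * (q : ℤ) ^ (τ * m) ≡ δ [ZMOD ((ℓ ^ N : ℕ) : ℤ)] ↔
      ℓ ^ (N - (padicValInt ℓ δ + padicValInt ℓ ((q : ℤ) ^ τ - 1))) ∣ m := by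
    rw [Int.modEq_comm, Int.modEq_iff_dvd, ← mul_sub_one, pow_mul, Nat.cast_pow]
    exact pow_dvd_mul_pow_sub_one_iff (hℓ.odd_of_ne_two hℓ2) hqτ hdvd hδ N m
  refine isLeast_pos_of_forall_iff_dvd (Nat.mul_pos hτ.1.1 (pow_pos hℓ.pos _)) fun j => ?_
  rw [Nat.cast_mul, ← Int.modEq_and_modEq_iff_modEq_mul hcop, and_comm, hn_part]
  apply dvd_and_iff_mul_dvd
  exact hℓ_part

theorem stmt_12 (p e q ℓ n : ℕ) (hp : p.Prime) (he : 0 < e) (hq : q = p ^ e)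
    (hℓ : ℓ.Prime) (hℓ2 : ℓ ≠ 2) (hℓp : ℓ ≠ p)
    (hn : 0 < n) (hnp : ¬ p ∣ n) (hnℓ : ¬ ℓ ∣ n)
    (γ : ℤ) (τ : ℕ)
    (hτ : IsLeast {t : ℕ | 0 < t ∧ γ * (q : ℤ) ^ t ≡ γ [ZMOD (n : ℤ)]} τ)
    (hdvd : (ℓ : ℤ) ∣ (q : ℤ) ^ τ - 1) :
    ∀ δ : ℤ, δ ≠ 0 → δ ≡ γ [ZMOD (n : ℤ)] → ∀ N : ℕ,
      IsLeast {j : ℕ | 0 < j ∧ δ * (q : ℤ) ^ j ≡ δ [ZMOD ((ℓ ^ N * n : ℕ) : ℤ)]}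
        (τ * ℓ ^ (N - (padicValInt ℓ δ + padicValInt ℓ ((q : ℤ) ^ τ - 1)))) :=
  stmt_12_general p e q ℓ n hp he hq hℓ hℓ2 hnℓ γ τ hτ hdvd
end

section
/- Let q be an odd prime power and m a positive integer coprime to q. Let γ be an integer and τ the least positive integer with γ·q^τ ≡ γ (mod m). If v_2(q^τ − 1) + v_2(γ) ≥ v_2(m) + 1 (equivalently, 2m ∣ γ·q^τ − γ), then: (i) the q-cyclotomic coset modulo 2m containing γ has size τ; (ii) the q-cyclotomic coset modulo 2m containing m + γ also has size τ and equals {m + γ·q^j mod 2m : 0 ≤ j ≤ τ−1}; (iii) these two cosets are disjoint; and (iv) their union is exactly the preimage of c_{m/q}(γ) under the canonical projection ℤ/2mℤ → ℤ/mℤ. -/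
private lemma aux_geo (n γ q : ℤ) (τ : ℕ) (h : n ∣ γ * q ^ τ - γ) :
    ∀ k : ℕ, n ∣ γ * q ^ (k * τ) - γ := by
  intro k
  induction k with
  | zero => simp
  | succ k ih =>
      have hid : γ * q ^ ((k + 1) * τ) - γ
          = q ^ τ * (γ * q ^ (k * τ) - γ) + (γ * q ^ τ - γ) := by
        rw [add_mul, one_mul, pow_add]; ring
      rw [hid]
      exact dvd_add (ih.mul_left _) h

private lemma aux_shift (n γ q : ℤ) (j d : ℕ) (h : n ∣ γ * q ^ d - γ) :
    n ∣ γ * q ^ (j + d) - γ * q ^ j := by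
  have hid : γ * q ^ (j + d) - γ * q ^ j = q ^ j * (γ * q ^ d - γ) := by
    rw [pow_add]; ring
  rw [hid]; exact h.mul_left _

private lemma aux_reduce (n γ q : ℤ) (τ : ℕ) (hτ : 0 < τ) (h : n ∣ γ * q ^ τ - γ)
    (i : ℕ) : ∃ j < τ, n ∣ γ * q ^ i - γ * q ^ j := by
  refine ⟨i % τ, Nat.mod_lt _ hτ, ?_⟩
  have h2 := aux_shift n γ q (i % τ) (i / τ * τ) (aux_geo n γ q τ h (i / τ))
  rwa [Nat.mod_add_div'] at h2

theorem stmt_14 (p e q m : ℕ) (hp : p.Prime) (hp2 : p ≠ 2) (he : 0 < e) (hq : q = p ^ e)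
    (hm : 0 < m) (hmq : Nat.Coprime m q)
    (γ : ℤ) (τ : ℕ)
    (hτ : IsLeast {t : ℕ | 0 < t ∧ γ * (q : ℤ) ^ t ≡ γ [ZMOD (m : ℤ)]} τ)
    (hval : (2 * m : ℤ) ∣ γ * (q : ℤ) ^ τ - γ) :
    IsLeast {j : ℕ | 0 < j ∧ γ * (q : ℤ) ^ j ≡ γ [ZMOD ((2 * m : ℕ) : ℤ)]} τ ∧
      IsLeast {j : ℕ | 0 < j ∧
        ((m : ℤ) + γ) * (q : ℤ) ^ j ≡ (m : ℤ) + γ [ZMOD ((2 * m : ℕ) : ℤ)]} τ ∧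
      cycCoset q (2 * m) ((m : ℤ) + γ) =
        {x : ZMod (2 * m) | ∃ j < τ, x = (((m : ℤ) + γ * (q : ℤ) ^ j : ℤ) : ZMod (2 * m))} ∧
      Disjoint (cycCoset q (2 * m) γ) (cycCoset q (2 * m) ((m : ℤ) + γ)) ∧
      cycCoset q (2 * m) γ ∪ cycCoset q (2 * m) ((m : ℤ) + γ) =
        (ZMod.castHom (dvd_mul_left m 2) (ZMod m)) ⁻¹' (cycCoset q m γ) := by
  obtain ⟨⟨hτpos, hτmem⟩, hτlb⟩ := hτ
  haveI : NeZero (2 * m) := ⟨by omega⟩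
  have hcast2 : ((2 * m : ℕ) : ℤ) = 2 * (m : ℤ) := by push_cast; ring
  have hModDvd : ∀ (n a b : ℤ), (a ≡ b [ZMOD n]) ↔ n ∣ a - b := by
    intro n a b; rw [Int.modEq_iff_dvd, dvd_sub_comm]
  have hvalm : (m : ℤ) ∣ γ * q ^ τ - γ := (hModDvd _ _ _).mp hτmem
  have hmd2m : (m : ℤ) ∣ 2 * (m : ℤ) := dvd_mul_left _ _
  -- q is odd
  have hOddq : Odd q := by subst hq; exact (hp.odd_of_ne_two hp2).pow
  have hOddqz : Odd (q : ℤ) := by exact_mod_cast hOddq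
  have hmq2 : ∀ j : ℕ, (2 * (m : ℤ)) ∣ (m : ℤ) * (q : ℤ) ^ j - m := by
    intro j
    obtain ⟨k, hk⟩ := hOddqz.pow (n := j)
    exact ⟨k, by linear_combination (m : ℤ) * hk⟩
  -- divisibility mod m upgrades to mod 2m
  have hdvd2 : ∀ t : ℕ, (m : ℤ) ∣ γ * q ^ t - γ → (2 * (m : ℤ)) ∣ γ * q ^ t - γ := by
    intro t ht
    have hr : t % τ = 0 := by
      by_contra hr0
      have h1 : (m : ℤ) ∣ γ * q ^ t - γ * q ^ (t % τ) := by
        have h2 := aux_shift (m : ℤ) γ q (t % τ) (t / τ * τ) (aux_geo _ _ _ _ hvalm (t / τ))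
        rwa [Nat.mod_add_div'] at h2
      have h3 : (m : ℤ) ∣ γ * q ^ (t % τ) - γ := by
        have hid : γ * (q : ℤ) ^ (t % τ) - γ
            = (γ * q ^ t - γ) - (γ * q ^ t - γ * q ^ (t % τ)) := by ring
        rw [hid]; exact dvd_sub ht h1
      have h4 := hτlb ⟨Nat.pos_of_ne_zero hr0, (hModDvd _ _ _).mpr h3⟩
      have h5 : t % τ < τ := Nat.mod_lt _ hτpos
      omega
    have ht2 : t = t / τ * τ := (Nat.div_mul_cancel (Nat.dvd_of_mod_eq_zero hr)).symm
    rw [ht2]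
    exact aux_geo _ _ _ _ hval (t / τ)
  -- step lemma for disjointness
  have hcoz : IsCoprime (m : ℤ) (q : ℤ) := Nat.isCoprime_iff_coprime.mpr hmq
  have hstep : ∀ (j d : ℕ), (m : ℤ) ∣ γ * q ^ (j + d) - γ * q ^ j →
      (2 * (m : ℤ)) ∣ γ * q ^ (j + d) - γ * q ^ j := by
    intro j d hdvd
    have hfac : γ * (q : ℤ) ^ (j + d) - γ * q ^ j = (q : ℤ) ^ j * (γ * q ^ d - γ) := by
      rw [pow_add]; ring
    have hm2 : (m : ℤ) ∣ γ * q ^ d - γ :=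
      (hcoz.pow_right (n := j)).dvd_of_dvd_mul_left (by rw [← hfac]; exact hdvd)
    rw [hfac]
    exact (hdvd2 d hm2).mul_left _
  -- cast lemmas
  have hZeq : ∀ a b : ℤ, ((a : ZMod (2 * m)) = (b : ZMod (2 * m))) ↔ (2 * (m : ℤ)) ∣ a - b := by
    intro a b
    rw [ZMod.intCast_eq_intCast_iff, hModDvd, hcast2]
  have hZeqm : ∀ a b : ℤ, ((a : ZMod m) = (b : ZMod m)) ↔ ((m : ℤ)) ∣ a - b := by
    intro a b
    rw [ZMod.intCast_eq_intCast_iff, hModDvd]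
  have hcoset : ∀ (δ : ℤ) (x : ZMod (2 * m)),
      x ∈ cycCoset q (2 * m) δ ↔ ∃ j : ℕ, x = ((δ * (q : ℤ) ^ j : ℤ) : ZMod (2 * m)) := by
    intro δ x
    simp only [cycCoset, Set.mem_setOf_eq]
    constructor <;> rintro ⟨j, hj⟩ <;> exact ⟨j, by rw [hj]; push_cast; ring⟩
  have hswap : ∀ j : ℕ, (((((m : ℤ) + γ) * (q : ℤ) ^ j : ℤ)) : ZMod (2 * m))
      = ((((m : ℤ) + γ * (q : ℤ) ^ j : ℤ)) : ZMod (2 * m)) := by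
    intro j
    rw [hZeq]
    have hid : ((m : ℤ) + γ) * (q : ℤ) ^ j - ((m : ℤ) + γ * q ^ j)
        = (m : ℤ) * q ^ j - m := by ring
    rw [hid]; exact hmq2 j
  refine ⟨?_, ?_, ?_, ?_, ?_⟩
  · -- part (i)
    constructor
    · exact ⟨hτpos, (hModDvd _ _ _).mpr (by rw [hcast2]; exact hval)⟩
    · rintro j ⟨hj0, hjm⟩
      have := (hModDvd _ _ _).mp hjm
      rw [hcast2] at this
      exact hτlb ⟨hj0, (hModDvd _ _ _).mpr (hmd2m.trans this)⟩
  · -- part (ii)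
    constructor
    · refine ⟨hτpos, (hModDvd _ _ _).mpr ?_⟩
      rw [hcast2]
      have hid : ((m : ℤ) + γ) * (q : ℤ) ^ τ - ((m : ℤ) + γ)
          = ((m : ℤ) * q ^ τ - m) + (γ * q ^ τ - γ) := by ring
      rw [hid]; exact dvd_add (hmq2 τ) hval
    · rintro j ⟨hj0, hjm⟩
      have h1 := (hModDvd _ _ _).mp hjm
      rw [hcast2] at h1
      have h2 : (2 * (m : ℤ)) ∣ γ * q ^ j - γ := by
        have hid : γ * (q : ℤ) ^ j - γ
            = (((m : ℤ) + γ) * q ^ j - ((m : ℤ) + γ)) - ((m : ℤ) * q ^ j - m) := by ring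
        rw [hid]; exact dvd_sub h1 (hmq2 j)
      exact hτlb ⟨hj0, (hModDvd _ _ _).mpr (hmd2m.trans h2)⟩
  · -- part (iii)
    ext x
    simp only [Set.mem_setOf_eq]
    rw [hcoset]
    constructor
    · rintro ⟨i, hx⟩
      obtain ⟨j, hjlt, hjd⟩ := aux_reduce (2 * (m : ℤ)) γ q τ hτpos hval i
      refine ⟨j, hjlt, ?_⟩
      rw [hx, hswap i, hZeq]
      have hid : ((m : ℤ) + γ * (q : ℤ) ^ i) - ((m : ℤ) + γ * q ^ j)
          = γ * q ^ i - γ * q ^ j := by ring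
      rw [hid]; exact hjd
    · rintro ⟨j, hjlt, hx⟩
      exact ⟨j, by rw [hx, hswap j]⟩
  · -- part (iv): disjointness
    rw [Set.disjoint_left]
    rintro x hx1 hx2
    obtain ⟨i, hi⟩ := (hcoset _ _).mp hx1
    obtain ⟨j, hj⟩ := (hcoset _ _).mp hx2
    rw [hswap j] at hj
    have h1 : (2 * (m : ℤ)) ∣ γ * q ^ i - ((m : ℤ) + γ * q ^ j) := by
      rw [← hZeq, ← hi, ← hj]
    have hm1 : (m : ℤ) ∣ γ * q ^ i - γ * q ^ j := by
      have hid : γ * (q : ℤ) ^ i - γ * q ^ j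
          = (γ * q ^ i - ((m : ℤ) + γ * q ^ j)) + m := by ring
      rw [hid]; exact dvd_add (hmd2m.trans h1) dvd_rfl
    have key : (2 * (m : ℤ)) ∣ γ * q ^ i - γ * q ^ j := by
      rcases le_total j i with h | h
      · obtain ⟨d, rfl⟩ := Nat.exists_eq_add_of_le h
        exact hstep j d hm1
      · obtain ⟨d, rfl⟩ := Nat.exists_eq_add_of_le h
        have := hstep i d (by rw [← dvd_neg] at hm1; simpa using hm1)
        rw [← dvd_neg] at this; simpa using this
    have hfin : (2 * (m : ℤ)) ∣ (m : ℤ) := by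
      have h2 := dvd_sub key h1
      have hid : (γ * (q : ℤ) ^ i - γ * q ^ j) - (γ * q ^ i - ((m : ℤ) + γ * q ^ j))
          = (m : ℤ) := by ring
      rwa [hid] at h2
    have := Int.le_of_dvd (by exact_mod_cast hm) hfin
    omega
  · -- part (v): union equals preimage
    ext x
    simp only [Set.mem_union, Set.mem_preimage]
    constructor
    · rintro (hx | hx)
      · obtain ⟨i, hi⟩ := (hcoset _ _).mp hx
        rw [hi, map_intCast]
        exact ⟨i, by push_cast; ring⟩
      · obtain ⟨i, hi⟩ := (hcoset _ _).mp hx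
        rw [hswap i] at hi
        rw [hi, map_intCast]
        refine ⟨i, ?_⟩
        push_cast
        rw [ZMod.natCast_self, zero_add]
    · intro hx
      obtain ⟨j, hj⟩ := hx
      have hx0 : ((x.val : ℤ) : ZMod (2 * m)) = x := by
        rw [Int.cast_natCast]; exact ZMod.natCast_rightInverse x
      have hc : ((x.val : ℤ) : ZMod m) = ((γ * (q : ℤ) ^ j : ℤ) : ZMod m) := by
        rw [← map_intCast (ZMod.castHom (dvd_mul_left m 2) (ZMod m)) ((x.val : ℤ)), hx0, hj]
        push_cast; ring
      have hmdvd : (m : ℤ) ∣ (x.val : ℤ) - γ * q ^ j := (hZeqm _ _).mp hc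
      obtain ⟨k, hk⟩ := hmdvd
      rcases Int.even_or_odd k with ⟨l, hl⟩ | ⟨l, hl⟩
      · left
        rw [hcoset]
        refine ⟨j, ?_⟩
        rw [← hx0, hZeq]
        exact ⟨l, by linear_combination hk + (m : ℤ) * hl⟩
      · right
        rw [hcoset]
        refine ⟨j, ?_⟩
        rw [← hx0, hswap j, hZeq]
        exact ⟨l, by linear_combination hk + (m : ℤ) * hl⟩
end

section
/- Let q be an odd prime power and m a positive integer coprime to q. Let γ be an integer and τ the least positive integer with γ·q^τ ≡ γ (mod m). If 2m does not divide γ·q^τ − γ (equivalently, v_2(q^τ − 1) + v_2(γ) < v_2(m) + 1), then the q-cyclotomic coset modulo 2m containing γ has size 2τ, it contains m + γ, and it is exactly the preimage of c_{m/q}(γ) under the canonical projection ℤ/2mℤ → ℤ/mℤ. -/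
theorem stmt_15 (p e q m : ℕ) (hp : p.Prime) (hp2 : p ≠ 2) (he : 0 < e) (hq : q = p ^ e)
    (hm : 0 < m) (hmq : Nat.Coprime m q)
    (γ : ℤ) (τ : ℕ)
    (hτ : IsLeast {t : ℕ | 0 < t ∧ γ * (q : ℤ) ^ t ≡ γ [ZMOD (m : ℤ)]} τ)
    (hval : ¬ (2 * m : ℤ) ∣ γ * (q : ℤ) ^ τ - γ) :
    IsLeast {j : ℕ | 0 < j ∧ γ * (q : ℤ) ^ j ≡ γ [ZMOD ((2 * m : ℕ) : ℤ)]} (2 * τ) ∧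
      (((m : ℤ) + γ : ℤ) : ZMod (2 * m)) ∈ cycCoset q (2 * m) γ ∧
      cycCoset q (2 * m) γ =
        (ZMod.castHom (dvd_mul_left m 2) (ZMod m)) ⁻¹' (cycCoset q m γ) := by
  have hm0 : (m : ℤ) ≠ 0 := by exact_mod_cast hm.ne'
  have h2m : ((2 * m : ℕ) : ℤ) = 2 * (m : ℤ) := by push_cast; ring
  have hqodd : Odd (q : ℤ) := by
    have : Odd q := by rw [hq]; exact (hp.odd_of_ne_two hp2).pow
    exact_mod_cast this
  obtain ⟨⟨hτpos, hτmod⟩, hτmin⟩ := hτ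
  have hmdvd : (m : ℤ) ∣ γ * (q : ℤ) ^ τ - γ := hτmod.symm.dvd
  obtain ⟨u, hu⟩ := hmdvd
  have hu_odd : Odd u := by
    rcases Int.even_or_odd u with heu | hou
    · obtain ⟨v, hv⟩ := heu
      exact absurd ⟨v, by rw [hu, hv]; ring⟩ hval
    · exact hou
  obtain ⟨w, hw⟩ := hu_odd
  have hkey : (2 * (m : ℤ)) ∣ γ * (q : ℤ) ^ τ - γ - m := ⟨w, by rw [hu, hw]; ring⟩
  have hstep : ∀ j : ℕ, (2 * (m : ℤ)) ∣ γ * (q : ℤ) ^ (j + τ) - (γ * (q : ℤ) ^ j + m) := by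
    intro j
    have h1 : (2 * (m : ℤ)) ∣ ((q : ℤ) ^ j - 1) * m := by
      obtain ⟨s, hs⟩ := hqodd.pow (n := j)
      exact ⟨s, by rw [hs]; ring⟩
    have heq : γ * (q : ℤ) ^ (j + τ) - (γ * (q : ℤ) ^ j + m)
        = (q : ℤ) ^ j * (γ * (q : ℤ) ^ τ - γ - m) + ((q : ℤ) ^ j - 1) * m := by
      rw [pow_add]; ring
    rw [heq]
    exact dvd_add (hkey.mul_left _) h1
  have hiter : ∀ k : ℕ, (2 * (m : ℤ)) ∣ γ * (q : ℤ) ^ (k * τ) - (γ + (k : ℤ) * m) := by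
    intro k
    induction k with
    | zero => simp
    | succ k ih =>
      have h1 := hstep (k * τ)
      have heq : γ * (q : ℤ) ^ ((k + 1) * τ) - (γ + ((k : ℕ) + 1 : ℤ) * m)
          = (γ * (q : ℤ) ^ (k * τ + τ) - (γ * (q : ℤ) ^ (k * τ) + m))
            + (γ * (q : ℤ) ^ (k * τ) - (γ + (k : ℤ) * m)) := by
        rw [show (k + 1) * τ = k * τ + τ by ring]; ring
      have := dvd_add h1 ih
      rw [← heq] at this
      exact_mod_cast this
  have hiterm : ∀ a : ℕ, (m : ℤ) ∣ γ * (q : ℤ) ^ (a * τ) - γ := by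
    intro a
    have h1 : (m : ℤ) ∣ γ * (q : ℤ) ^ (a * τ) - (γ + (a : ℤ) * m) :=
      (dvd_mul_left (m : ℤ) 2).trans (hiter a)
    have h2 : (m : ℤ) ∣ (a : ℤ) * m := dvd_mul_left _ _
    have := dvd_add h1 h2
    simpa [sub_add] using this
  have hτdvd : ∀ t : ℕ, (m : ℤ) ∣ γ * (q : ℤ) ^ t - γ → τ ∣ t := by
    intro t ht
    have htr : t = (t / τ) * τ + t % τ := by
      rw [mul_comm]; exact (Nat.div_add_mod t τ).symm
    set a := t / τ with ha
    set r := t % τ with hr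
    have h1 : (m : ℤ) ∣ γ * (q : ℤ) ^ t - γ * (q : ℤ) ^ r := by
      have h := (hiterm a).mul_right ((q : ℤ) ^ r)
      have heq : (γ * (q : ℤ) ^ (a * τ) - γ) * (q : ℤ) ^ r
          = γ * (q : ℤ) ^ t - γ * (q : ℤ) ^ r := by
        rw [htr, pow_add]; ring
      rwa [heq] at h
    have h2 : (m : ℤ) ∣ γ * (q : ℤ) ^ r - γ := by
      have := ht.sub h1
      simpa using this
    have hr0 : r = 0 := by
      by_contra hne
      have hrmem : r ∈ {t : ℕ | 0 < t ∧ γ * (q : ℤ) ^ t ≡ γ [ZMOD (m : ℤ)]} :=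
        ⟨Nat.pos_of_ne_zero hne, Int.modEq_iff_dvd.mpr (dvd_sub_comm.mp h2)⟩
      have := hτmin hrmem
      have hlt : r < τ := Nat.mod_lt t hτpos
      omega
    exact ⟨a, by rw [htr, hr0, Nat.add_zero, mul_comm]⟩
  have hq2τ : (2 * (m : ℤ)) ∣ γ * (q : ℤ) ^ (2 * τ) - γ := by
    have h := hiter 2
    have heq : γ * (q : ℤ) ^ (2 * τ) - γ
        = (γ * (q : ℤ) ^ (2 * τ) - (γ + (2 : ℤ) * m)) + 2 * m := by push_cast; ring
    rw [heq]
    exact dvd_add (by exact_mod_cast h) (dvd_refl _)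
  refine ⟨⟨⟨by omega, ?_⟩, ?_⟩, ?_, ?_⟩
  · -- 2τ is in the set
    rw [h2m] at *
    exact Int.modEq_iff_dvd.mpr (dvd_sub_comm.mp hq2τ)
  · -- lower bound
    rintro t ⟨ht0, htmod⟩
    have h2dvd : (2 * (m : ℤ)) ∣ γ * (q : ℤ) ^ t - γ := by
      have := htmod.symm.dvd
      rwa [h2m] at this
    obtain ⟨k, hk⟩ := hτdvd t ((dvd_mul_left (m : ℤ) 2).trans h2dvd)
    have hkiter := hiter k
    rw [show k * τ = t by rw [hk, mul_comm]] at hkiter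
    have hkm : (2 * (m : ℤ)) ∣ (k : ℤ) * m := by
      have := h2dvd.sub hkiter
      simpa using this
    obtain ⟨c, hc⟩ := hkm
    have hkc : (k : ℤ) = 2 * c := by
      have : (k : ℤ) * m = (2 * c) * m := by rw [hc]; ring
      exact mul_right_cancel₀ hm0 this
    have hk1 : 1 ≤ k := by
      rcases Nat.eq_zero_or_pos k with h | h
      · subst h; simp at hk; omega
      · exact h
    have hc1 : 1 ≤ c := by
      by_contra hcc
      push_neg at hcc
      omega
    have hk2 : 2 ≤ k := by omega
    calc 2 * τ = τ * 2 := by ring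
    _ ≤ τ * k := Nat.mul_le_mul_left τ hk2
    _ = t := hk.symm
  · -- m + γ membership
    refine ⟨τ, ?_⟩
    have hrh : (γ : ZMod (2 * m)) * (q : ZMod (2 * m)) ^ τ
        = ((γ * (q : ℤ) ^ τ : ℤ) : ZMod (2 * m)) := by push_cast; ring
    rw [hrh, ZMod.intCast_eq_intCast_iff]
    have h := hstep 0
    simp only [pow_zero, mul_one, Nat.zero_add] at h
    refine Int.modEq_iff_dvd.mpr ?_
    rw [h2m]
    have heq : γ * (q : ℤ) ^ τ - ((m : ℤ) + γ) = γ * (q : ℤ) ^ τ - (γ + m) := by ring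
    rw [heq]
    exact h
  · -- preimage equality
    ext x
    constructor
    · rintro ⟨j, rfl⟩
      refine ⟨j, ?_⟩
      simp [map_mul, map_pow, map_intCast, map_natCast]
    · rintro ⟨j, hx⟩
      haveI : NeZero (2 * m) := ⟨by omega⟩
      have hxval : ((x.val : ℤ) : ZMod (2 * m)) = x := by
        push_cast
        simp [ZMod.natCast_val, ZMod.cast_id]
      have hxm : ((x.val : ℤ) : ZMod m) = ((γ * (q : ℤ) ^ j : ℤ) : ZMod m) := by
        rw [← hxval] at hx
        simp only [map_intCast] at hx
        rw [hx]; push_cast; ring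
      have hmd : (m : ℤ) ∣ γ * (q : ℤ) ^ j - (x.val : ℤ) := by
        have := (ZMod.intCast_eq_intCast_iff _ _ _).mp hxm
        exact dvd_sub_comm.mp this.symm.dvd
      obtain ⟨c, hc⟩ := hmd
      rcases Int.even_or_odd c with ⟨d, hd⟩ | ⟨d, hd⟩
      · refine ⟨j, ?_⟩
        rw [← hxval]
        have hrh : (γ : ZMod (2 * m)) * (q : ZMod (2 * m)) ^ j
            = ((γ * (q : ℤ) ^ j : ℤ) : ZMod (2 * m)) := by push_cast; ring
        rw [hrh, ZMod.intCast_eq_intCast_iff]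
        refine Int.modEq_iff_dvd.mpr ?_
        rw [h2m]
        exact ⟨d, by rw [hc, hd]; ring⟩
      · refine ⟨j + τ, ?_⟩
        rw [← hxval]
        have hrh : (γ : ZMod (2 * m)) * (q : ZMod (2 * m)) ^ (j + τ)
            = ((γ * (q : ℤ) ^ (j + τ) : ℤ) : ZMod (2 * m)) := by push_cast; ring
        rw [hrh, ZMod.intCast_eq_intCast_iff]
        refine Int.modEq_iff_dvd.mpr ?_
        rw [h2m]
        have heq : γ * (q : ℤ) ^ (j + τ) - (x.val : ℤ)
            = (γ * (q : ℤ) ^ (j + τ) - (γ * (q : ℤ) ^ j + m))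
              + ((γ * (q : ℤ) ^ j - (x.val : ℤ)) + m) := by ring
        rw [heq]
        refine dvd_add (hstep j) ?_
        exact ⟨d + 1, by rw [hc, hd]; ring⟩
end

section
/- Let p be an odd prime, q = p^e a power of p, and n a positive odd integer not divisible by p. Let γ be an integer, τ the least positive integer with γ·q^τ ≡ γ (mod n), and assume q^τ ≡ 1 (mod 4); set v = v_2(q^τ − 1). Then for every nonzero integer δ with δ ≡ γ (mod n) and every N ≥ 0, the size of the q-cyclotomic coset modulo 2^N n containing δ equals τ·2^{max(0, N − v_2(δ) − v)}. -/
private lemma periodic_iff_dvd {c x m : ℤ} {τ : ℕ}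
    (hτ : IsLeast {t : ℕ | 0 < t ∧ c * x ^ t ≡ c [ZMOD m]} τ) (t : ℕ) :
    c * x ^ t ≡ c [ZMOD m] ↔ τ ∣ t := by
  obtain ⟨⟨hτpos, hτmem⟩, hlb⟩ := hτ
  constructor
  · intro ht
    induction t using Nat.strong_induction_on with
    | _ t ih =>
      rcases Nat.eq_zero_or_pos t with h0 | hpos
      · simp [h0]
      · have hle : τ ≤ t := hlb ⟨hpos, ht⟩
        have h1 : c * x ^ t ≡ c * x ^ (t - τ) [ZMOD m] := by
          have h2 := hτmem.mul_right (x ^ (t - τ))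
          calc c * x ^ t = c * x ^ τ * x ^ (t - τ) := by
                rw [mul_assoc, ← pow_add]; congr 2; omega
            _ ≡ c * x ^ (t - τ) [ZMOD m] := h2
        have h2 : c * x ^ (t - τ) ≡ c [ZMOD m] := h1.symm.trans ht
        have h3 : τ ∣ t - τ := ih (t - τ) (by omega) h2
        obtain ⟨k, hk⟩ := h3
        exact ⟨k + 1, by rw [Nat.mul_succ, ← hk]; omega⟩
  · rintro ⟨k, rfl⟩
    induction k with
    | zero => simp
    | succ k ih =>
      have he : c * x ^ (τ * (k + 1)) = c * x ^ (τ * k) * x ^ τ := by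
        rw [mul_assoc, ← pow_add, Nat.mul_succ]
      rw [he]
      exact ((ih.mul_right (x ^ τ)).trans hτmem)

private lemma odd_geom_sum {x : ℤ} (hx : Odd x) {m : ℕ} (hm : Odd m) :
    ¬ (2 : ℤ) ∣ ∑ i ∈ Finset.range m, x ^ i := by
  have h2 : ((2 : ℕ) : ℤ) = (2 : ℤ) := by norm_num
  rw [← h2, ← ZMod.intCast_zmod_eq_zero_iff_dvd]
  push_cast
  obtain ⟨a, ha⟩ := hx
  have hx2 : ((x : ZMod 2)) = 1 := by
    rw [ha]; push_cast
    have : (2 : ZMod 2) = 0 := by decide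
    rw [this]; ring
  rw [Finset.sum_congr rfl (fun i _ => by rw [hx2, one_pow])]
  rw [Finset.sum_const, Finset.card_range, nsmul_eq_mul, mul_one]
  intro hcon
  rw [ZMod.natCast_eq_zero_iff] at hcon
  rw [Nat.odd_iff] at hm
  omega

private lemma lte_odd {x : ℤ} (hx2 : 2 ≤ x) (hxodd : Odd x) {m : ℕ} (hm : Odd m) :
    padicValInt 2 (x ^ m - 1) = padicValInt 2 (x - 1) := by
  haveI : Fact (Nat.Prime 2) := ⟨Nat.prime_two⟩
  have hgeom := geom_sum_mul x m
  have hmpos : 0 < m := hm.pos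
  have hxm : (1 : ℤ) < x ^ m := one_lt_pow₀ (by omega) (by omega)
  have hne : x ^ m - 1 ≠ 0 := by omega
  have hSne : (∑ i ∈ Finset.range m, x ^ i) ≠ 0 := by
    intro h; rw [h, zero_mul] at hgeom; omega
  have hx1ne : x - 1 ≠ 0 := by omega
  rw [← hgeom, padicValInt.mul hSne hx1ne,
    padicValInt.eq_zero_of_not_dvd (odd_geom_sum hxodd hm)]
  omega

private lemma val_two_eq_one {z : ℤ} (h2 : (2 : ℤ) ∣ z) (h4 : ¬ (4 : ℤ) ∣ z) :
    padicValInt 2 z = 1 := by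
  haveI : Fact (Nat.Prime 2) := ⟨Nat.prime_two⟩
  have hzne : z ≠ 0 := by rintro rfl; exact h4 (dvd_zero 4)
  have hlo : 1 ≤ padicValInt 2 z := by
    have := (padicValInt_dvd_iff (p := 2) 1 z).mp (by push_cast; simpa using h2)
    tauto
  have hhi : ¬ 2 ≤ padicValInt 2 z := by
    intro h
    have := (padicValInt_dvd_iff (p := 2) 2 z).mpr (Or.inr h)
    apply h4
    have h42 : (4 : ℤ) = ((2 : ℕ) : ℤ) ^ 2 := by norm_num
    rwa [h42]
  omega

private lemma lte_double {x : ℤ} (hx2 : 2 ≤ x) (hx4 : x ≡ 1 [ZMOD 4]) {m : ℕ} (hm : 0 < m) :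
    padicValInt 2 (x ^ (2 * m) - 1) = padicValInt 2 (x ^ m - 1) + 1 := by
  haveI : Fact (Nat.Prime 2) := ⟨Nat.prime_two⟩
  have hfac : x ^ (2 * m) - 1 = (x ^ m - 1) * (x ^ m + 1) := by
    rw [two_mul, pow_add]; ring
  have hxm : (1 : ℤ) < x ^ m := one_lt_pow₀ (by omega) (by omega)
  have hne1 : x ^ m - 1 ≠ 0 := by omega
  have hne2 : x ^ m + 1 ≠ 0 := by omega
  have hmod : x ^ m ≡ 1 [ZMOD 4] := by
    have := hx4.pow m
    rwa [one_pow] at this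
  have hdvd : (4 : ℤ) ∣ 1 - x ^ m := (Int.modEq_iff_dvd).mp hmod
  obtain ⟨k, hk⟩ := hdvd
  have h2 : (2 : ℤ) ∣ x ^ m + 1 := ⟨1 - 2 * k, by omega⟩
  have h4 : ¬ (4 : ℤ) ∣ x ^ m + 1 := by
    rintro ⟨l, hl⟩; omega
  rw [hfac, padicValInt.mul hne1 hne2, val_two_eq_one h2 h4]

private lemma lte_main {x : ℤ} (hx2 : 2 ≤ x) (hx4 : x ≡ 1 [ZMOD 4]) :
    ∀ m : ℕ, 0 < m → padicValInt 2 (x ^ m - 1) = padicValInt 2 (x - 1) + padicValNat 2 m := by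
  haveI : Fact (Nat.Prime 2) := ⟨Nat.prime_two⟩
  have hxodd : Odd x := by
    obtain ⟨k, hk⟩ := (Int.modEq_iff_dvd).mp hx4
    exact ⟨-2 * k, by omega⟩
  intro m
  induction m using Nat.strong_induction_on with
  | _ m ih =>
    intro hm
    rcases Nat.even_or_odd m with heven | hodd
    · obtain ⟨k, hk⟩ := heven
      have hk0 : 0 < k := by omega
      have hm2 : m = 2 * k := by omega
      have hvk : padicValNat 2 (2 * k) = 1 + padicValNat 2 k := by
        rw [padicValNat.mul (by norm_num) (by omega), padicValNat_self]
      rw [hm2, lte_double hx2 hx4 hk0, ih k (by omega) hk0, hvk]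
      omega
    · rw [lte_odd hx2 hxodd hodd,
        padicValNat.eq_zero_of_not_dvd (by rwa [Nat.two_dvd_ne_zero, ← Nat.odd_iff])]
      omega

theorem stmt_16 (p e q n : ℕ) (hp : p.Prime) (hp2 : p ≠ 2) (he : 0 < e) (hq : q = p ^ e)
    (hn : 0 < n) (hnodd : Odd n) (hnp : ¬ p ∣ n)
    (γ : ℤ) (τ : ℕ)
    (hτ : IsLeast {t : ℕ | 0 < t ∧ γ * (q : ℤ) ^ t ≡ γ [ZMOD (n : ℤ)]} τ)
    (hq4 : (q : ℤ) ^ τ ≡ 1 [ZMOD 4]) :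
    ∀ δ : ℤ, δ ≠ 0 → δ ≡ γ [ZMOD (n : ℤ)] → ∀ N : ℕ,
      IsLeast {j : ℕ | 0 < j ∧ δ * (q : ℤ) ^ j ≡ δ [ZMOD ((2 ^ N * n : ℕ) : ℤ)]}
        (τ * 2 ^ (N - (padicValInt 2 δ + padicValInt 2 ((q : ℤ) ^ τ - 1)))) := by
  haveI : Fact (Nat.Prime 2) := ⟨Nat.prime_two⟩
  intro δ hδ0 hδγ N
  set a := padicValInt 2 δ with ha
  set v := padicValInt 2 ((q : ℤ) ^ τ - 1) with hv
  set s := N - (a + v) with hs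
  have hτpos : 0 < τ := hτ.1.1
  have hq3 : 3 ≤ q := by
    have hp3 : 3 ≤ p := by
      rcases hp.two_le.lt_or_eq with h | h
      · omega
      · omega
    calc 3 ≤ p := hp3
      _ ≤ p ^ e := Nat.le_self_pow (by omega) p
      _ = q := hq.symm
  have hx2 : (2 : ℤ) ≤ (q : ℤ) ^ τ := by
    calc (2 : ℤ) ≤ (q : ℤ) := by exact_mod_cast (by omega : 2 ≤ q)
      _ = (q : ℤ) ^ 1 := (pow_one _).symm
      _ ≤ (q : ℤ) ^ τ := pow_le_pow_right₀ (by exact_mod_cast (by omega : 1 ≤ q)) hτpos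
  -- characterization modulo n, for δ
  have hchar : ∀ t : ℕ, (δ * (q : ℤ) ^ t ≡ δ [ZMOD (n : ℤ)]) ↔ τ ∣ t := by
    intro t
    rw [← periodic_iff_dvd hτ t]
    constructor
    · intro h
      exact (hδγ.mul_right _).symm.trans (h.trans hδγ)
    · intro h
      exact (hδγ.mul_right _).trans (h.trans hδγ.symm)
  -- splitting divisibility by 2^N * n
  have hcop : IsCoprime ((2 : ℤ) ^ N) (n : ℤ) := by
    have h1 : Nat.Coprime 2 n := hnodd.coprime_two_left
    have h2 : IsCoprime ((2 : ℕ) : ℤ) ((n : ℕ) : ℤ) := Nat.isCoprime_iff_coprime.mpr h1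
    exact (by push_cast at h2 ⊢; exact h2 : IsCoprime (2 : ℤ) (n : ℤ)).pow_left
  have hsplit : ∀ z : ℤ, (((2 ^ N * n : ℕ) : ℤ) ∣ z) ↔ ((2 : ℤ) ^ N ∣ z ∧ (n : ℤ) ∣ z) := by
    intro z
    have hcast : ((2 ^ N * n : ℕ) : ℤ) = (2 : ℤ) ^ N * (n : ℤ) := by push_cast; ring
    rw [hcast]
    constructor
    · intro h
      exact ⟨dvd_trans (Dvd.intro _ rfl) h, dvd_trans (Dvd.intro_left _ rfl) h⟩
    · intro ⟨h1, h2⟩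
      exact hcop.mul_dvd h1 h2
  -- membership as divisibility
  have hmem_iff : ∀ j : ℕ, (δ * (q : ℤ) ^ j ≡ δ [ZMOD ((2 ^ N * n : ℕ) : ℤ)]) ↔
      (((2 ^ N * n : ℕ) : ℤ) ∣ δ * ((q : ℤ) ^ j - 1)) := by
    intro j
    rw [Int.modEq_iff_dvd]
    constructor
    · intro h
      have : δ - δ * (q : ℤ) ^ j = -(δ * ((q : ℤ) ^ j - 1)) := by ring
      rw [this] at h
      exact (dvd_neg).mp h
    · intro h
      have : δ - δ * (q : ℤ) ^ j = -(δ * ((q : ℤ) ^ j - 1)) := by ring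
      rw [this]
      exact (dvd_neg).mpr h
  -- n-part as modEq
  have hnpart : ∀ j : ℕ, ((n : ℤ) ∣ δ * ((q : ℤ) ^ j - 1)) ↔ τ ∣ j := by
    intro j
    rw [← hchar j, Int.modEq_iff_dvd]
    constructor
    · intro h
      have he : δ - δ * (q : ℤ) ^ j = -(δ * ((q : ℤ) ^ j - 1)) := by ring
      rw [he]
      exact (dvd_neg).mpr h
    · intro h
      have he : δ - δ * (q : ℤ) ^ j = -(δ * ((q : ℤ) ^ j - 1)) := by ring
      rw [he] at h
      exact (dvd_neg).mp h
  -- 2-part via valuations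
  have hqj_pos : ∀ j : ℕ, 0 < j → (1 : ℤ) < (q : ℤ) ^ j := by
    intro j hj
    exact one_lt_pow₀ (by exact_mod_cast (by omega : 1 < q)) (by omega)
  have h2part : ∀ j : ℕ, 0 < j →
      (((2 : ℤ) ^ N ∣ δ * ((q : ℤ) ^ j - 1)) ↔ N ≤ a + padicValInt 2 ((q : ℤ) ^ j - 1)) := by
    intro j hj
    have hne : (q : ℤ) ^ j - 1 ≠ 0 := by have := hqj_pos j hj; omega
    have hzne : δ * ((q : ℤ) ^ j - 1) ≠ 0 := mul_ne_zero hδ0 hne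
    have hcast2 : ((2 : ℕ) : ℤ) = (2 : ℤ) := by norm_num
    rw [← hcast2, padicValInt_dvd_iff (p := 2) N, padicValInt.mul hδ0 hne]
    constructor
    · intro h; rcases h with h | h
      · exact absurd h hzne
      · exact h
    · intro h; exact Or.inr h
  -- LTE applied
  have hlte : ∀ m : ℕ, 0 < m → padicValInt 2 ((q : ℤ) ^ (τ * m) - 1) = v + padicValNat 2 m := by
    intro m hm
    rw [pow_mul]
    exact lte_main hx2 hq4 m hm
  constructor
  · -- membership of τ * 2 ^ s
    refine ⟨by positivity, ?_⟩
    rw [hmem_iff, hsplit]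
    constructor
    · rw [h2part _ (by positivity), hlte (2 ^ s) (by positivity), padicValNat.prime_pow]
      omega
    · rw [hnpart]
      exact Dvd.intro _ rfl
  · -- lower bound
    rintro j ⟨hjpos, hjmem⟩
    rw [hmem_iff, hsplit] at hjmem
    obtain ⟨h2dvd, hndvd⟩ := hjmem
    obtain ⟨m, hm⟩ := (hnpart j).mp hndvd
    have hm0 : 0 < m := by
      rcases Nat.eq_zero_or_pos m with h | h
      · subst h; omega
      · exact h
    rw [hm] at h2dvd
    rw [h2part _ (by omega : 0 < τ * m), hlte m hm0] at h2dvd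
    have hsle : s ≤ padicValNat 2 m := by omega
    have hdvd2 : 2 ^ s ∣ m :=
      dvd_trans (pow_dvd_pow 2 hsle) pow_padicValNat_dvd
    have : τ * 2 ^ s ∣ τ * m := mul_dvd_mul_left τ hdvd2
    calc τ * 2 ^ s ≤ τ * m := Nat.le_of_dvd (by positivity) this
      _ = j := hm.symm
end
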